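/- arXiv:1607.04850 — 9 statements merged into one kernel-verified Lean document; each statement's English description precedes it below -/
import Mathlib

section
/- (Lagrange interpolation form of a symmetric polynomial, Chen–Louck) Let P(x₁,…,x_k) be a symmetric polynomial over a field of characteristic zero whose degree in each variable is at most n−k, and let λ₁,…,λₙ be distinct. Then P(x₁,…,x_k) = ∑_{I⊂[n], |I|=k} P(λ_I) · [∏_{i=1}^k ∏_{j∈Iᶜ}(x_i−λ_j)] / [∏_{i∈I} ∏_{j∈Iᶜ}(λ_i−λ_j)], where for I = {i₁<…<i_k}, λ_I = (λ_{i₁},…,λ_{i_k}) and Iᶜ = [n]∖I. -/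
open Finset MvPolynomial

/-- A multivariate polynomial in `k` variables of degree at most `n - k` in each variable
which vanishes at every injective tuple of the `n` distinct values `lam` is zero. -/
lemma chen_louck_aux_vanish {F : Type*} [Field F] {n : ℕ} (lam : Fin n → F)
    (hlam : Function.Injective lam) :
    ∀ k, k ≤ n → ∀ Q : MvPolynomial (Fin k) F,
      (∀ i, Q.degreeOf i ≤ n - k) →
      (∀ f : Fin k → Fin n, Function.Injective f → MvPolynomial.eval (lam ∘ f) Q = 0) →
      Q = 0 := by
  intro k
  induction k with
  | zero =>
    intro _ Q _ hv
    obtain ⟨c, rfl⟩ := MvPolynomial.C_surjective (Fin 0) Q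
    have h := hv Fin.elim0 (fun a => a.elim0)
    simpa using h
  | succ k ih =>
    intro hkn Q hdeg hv
    have hkn' : k ≤ n := le_of_lt (Nat.lt_of_succ_le hkn)
    classical
    -- For each injective f : Fin k → Fin n, the induced one-variable polynomial vanishes.
    have key : ∀ f : Fin k → Fin n, Function.Injective f →
        (Polynomial.map (MvPolynomial.eval (lam ∘ f)) (finSuccEquiv F k Q)) = 0 := by
      intro f hf
      apply Polynomial.eq_zero_of_natDegree_lt_card_of_eval_eq_zero'
        (Polynomial.map (MvPolynomial.eval (lam ∘ f)) (finSuccEquiv F k Q))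
        (((Finset.univ.image f)ᶜ).image lam)
      · intro y hy
        obtain ⟨j, hj, rfl⟩ := Finset.mem_image.1 hy
        have hjf : ∀ i, f i ≠ j := by
          intro i hij
          exact (Finset.mem_compl.1 hj) (Finset.mem_image.2 ⟨i, Finset.mem_univ i, hij⟩)
        have hg : Function.Injective (Fin.cons j f : Fin (k + 1) → Fin n) := by
          rw [Fin.cons_injective_iff]
          refine ⟨?_, hf⟩
          rintro ⟨i, rfl⟩
          exact hjf i rfl
        have h0 := hv _ hg
        have hfun : (lam ∘ Fin.cons j f : Fin (k + 1) → F)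
            = Fin.cons (lam j) (lam ∘ f) := by
          funext i
          refine Fin.cases ?_ (fun i => ?_) i <;> simp
        rw [hfun, MvPolynomial.eval_eq_eval_mv_eval'] at h0
        exact h0
      · have hcard : (((Finset.univ.image f)ᶜ).image lam).card = n - k := by
          rw [Finset.card_image_of_injective _ hlam, Finset.card_compl,
            Finset.card_image_of_injective _ hf, Finset.card_univ, Fintype.card_fin,
            Fintype.card_fin]
        rw [hcard]
        calc (Polynomial.map (MvPolynomial.eval (lam ∘ f)) (finSuccEquiv F k Q)).natDegree
            ≤ (finSuccEquiv F k Q).natDegree := Polynomial.natDegree_map_le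
          _ = Q.degreeOf 0 := MvPolynomial.natDegree_finSuccEquiv Q
          _ ≤ n - (k + 1) := hdeg 0
          _ < n - k := by omega
    -- Hence every coefficient of `finSuccEquiv F k Q` vanishes.
    have hcoeff : ∀ m : ℕ, (finSuccEquiv F k Q).coeff m = 0 := by
      intro m
      apply ih hkn'
      · intro i
        calc ((finSuccEquiv F k Q).coeff m).degreeOf i
            ≤ Q.degreeOf i.succ := MvPolynomial.degreeOf_coeff_finSuccEquiv Q i m
          _ ≤ n - (k + 1) := hdeg i.succ
          _ ≤ n - k := by omega
      · intro f hf
        have h := key f hf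
        have := congrArg (fun p => Polynomial.coeff p m) h
        simpa [Polynomial.coeff_map] using this
    have hQ : finSuccEquiv F k Q = 0 := Polynomial.ext fun m => by simp [hcoeff m]
    have := (finSuccEquiv F k).injective (by simpa using hQ)
    simpa using this

/-- Chen–Louck interpolation formula for symmetric polynomials. -/
theorem chen_louck_interpolation {F : Type*} [Field F] [CharZero F]
    (n k : ℕ) (hk0 : 0 < k) (hk : k < n)
    (lam : Fin n → F) (hlam : Function.Injective lam)
    (P : MvPolynomial (Fin k) F) (hPsymm : P.IsSymmetric)
    (hPdeg : ∀ i : Fin k, P.degreeOf i ≤ n - k) :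
    P = ∑ I : {s : Finset (Fin n) // s.card = k},
          C ((MvPolynomial.eval (fun i => lam ((I.1.orderIsoOfFin I.2) i : Fin n)) P) /
              ∏ i ∈ I.1, ∏ j ∈ I.1ᶜ, (lam i - lam j)) *
            ∏ i : Fin k, ∏ j ∈ I.1ᶜ, (X i - C (lam j)) := by
  classical
  set S : MvPolynomial (Fin k) F :=
    ∑ I : {s : Finset (Fin n) // s.card = k},
          C ((MvPolynomial.eval (fun i => lam ((I.1.orderIsoOfFin I.2) i : Fin n)) P) /
              ∏ i ∈ I.1, ∏ j ∈ I.1ᶜ, (lam i - lam j)) *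
            ∏ i : Fin k, ∏ j ∈ I.1ᶜ, (X i - C (lam j)) with hS
  have hcompl : ∀ I : {s : Finset (Fin n) // s.card = k}, (I.1ᶜ : Finset (Fin n)).card = n - k := by
    intro I
    rw [Finset.card_compl, I.2, Fintype.card_fin]
  -- degree bound for S
  have hSdeg : ∀ i : Fin k, S.degreeOf i ≤ n - k := by
    intro i
    rw [hS]
    refine le_trans (MvPolynomial.degreeOf_sum_le _ _ _) ?_
    refine Finset.sup_le fun I _ => ?_
    refine le_trans (MvPolynomial.degreeOf_mul_le _ _ _) ?_
    rw [MvPolynomial.degreeOf_C, zero_add]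
    refine le_trans (MvPolynomial.degreeOf_prod_le _ _ _) ?_
    have hterm : ∀ i' : Fin k,
        MvPolynomial.degreeOf i (∏ j ∈ I.1ᶜ, (X i' - C (lam j))) ≤
          if i' = i then n - k else 0 := by
      intro i'
      refine le_trans (MvPolynomial.degreeOf_prod_le _ _ _) ?_
      have h1 : ∀ j ∈ I.1ᶜ, MvPolynomial.degreeOf i (X i' - C (lam j) : MvPolynomial (Fin k) F)
          ≤ if i' = i then 1 else 0 := by
        intro j _
        refine le_trans (MvPolynomial.degreeOf_sub_le _ _ _) ?_
        rw [MvPolynomial.degreeOf_C]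
        simp only [max_eq_left (Nat.zero_le _)]
        rcases eq_or_ne i' i with h | h
        · subst h; simp [MvPolynomial.degreeOf_X]
        · simp [MvPolynomial.degreeOf_X, h, Ne.symm h]
      refine le_trans (Finset.sum_le_sum h1) ?_
      rcases eq_or_ne i' i with h | h
      · simp [h, hcompl I]
      · simp [h]
    refine le_trans (Finset.sum_le_sum fun i' _ => hterm i') ?_
    rw [Finset.sum_ite_eq' Finset.univ i (fun _ => n - k)]
    simp
  -- P and S agree on all injective tuples
  have hagree : ∀ f : Fin k → Fin n, Function.Injective f →
      MvPolynomial.eval (lam ∘ f) (P - S) = 0 := by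
    intro f hf
    set I₀ : Finset (Fin n) := Finset.univ.image f with hI₀
    have hI₀card : I₀.card = k := by
      rw [hI₀, Finset.card_image_of_injective _ hf, Finset.card_univ, Fintype.card_fin]
    rw [map_sub, sub_eq_zero, hS, map_sum]
    rw [Finset.sum_eq_single_of_mem (⟨I₀, hI₀card⟩ : {s : Finset (Fin n) // s.card = k})
      (Finset.mem_univ _)]
    · -- main term
      have hprod : (∏ i : Fin k, ∏ j ∈ I₀ᶜ, (lam (f i) - lam j))
          = ∏ i ∈ I₀, ∏ j ∈ I₀ᶜ, (lam i - lam j) := by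
        rw [hI₀, Finset.prod_image (fun x _ y _ h => hf h)]
      have hD : (∏ i ∈ I₀, ∏ j ∈ I₀ᶜ, (lam i - lam j)) ≠ 0 := by
        refine Finset.prod_ne_zero_iff.2 fun i hi => Finset.prod_ne_zero_iff.2 fun j hj => ?_
        refine sub_ne_zero.2 fun h => ?_
        exact (Finset.mem_compl.1 hj) (hlam h ▸ hi)
      have heval : MvPolynomial.eval
          (fun i => lam ((I₀.orderIsoOfFin hI₀card) i : Fin n)) P
          = MvPolynomial.eval (lam ∘ f) P := by
        set e := I₀.orderIsoOfFin hI₀card with he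
        have hmem : ∀ i, f i ∈ I₀ := fun i =>
          Finset.mem_image.2 ⟨i, Finset.mem_univ i, rfl⟩
        have hbij : Function.Bijective (fun i => (⟨f i, hmem i⟩ : I₀)) := by
          rw [Fintype.bijective_iff_injective_and_card]
          constructor
          · intro a b hab
            exact hf (congrArg Subtype.val hab)
          · rw [Fintype.card_coe, hI₀card, Fintype.card_fin]
        set σ : Equiv.Perm (Fin k) := (Equiv.ofBijective _ hbij).trans e.toEquiv.symm with hσ
        have hcomp : (fun i => lam ((e i : Fin n))) ∘ σ = lam ∘ f := by
          funext i
          simp [hσ, Function.comp]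
        calc MvPolynomial.eval (fun i => lam ((e i : Fin n))) P
            = MvPolynomial.eval (fun i => lam ((e i : Fin n))) (rename σ P) := by
              rw [hPsymm σ]
          _ = MvPolynomial.eval ((fun i => lam ((e i : Fin n))) ∘ σ) P := by rw [eval_rename]
          _ = MvPolynomial.eval (lam ∘ f) P := by rw [hcomp]
      simp only [map_mul, eval_C, map_prod, map_sub, eval_X, eval_C]
      rw [heval]
      have : (∏ i : Fin k, ∏ j ∈ I₀ᶜ, ((lam ∘ f) i - lam j))
          = ∏ i ∈ I₀, ∏ j ∈ I₀ᶜ, (lam i - lam j) := hprod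
      rw [this, div_mul_cancel₀ _ hD]
    · -- other terms vanish
      intro I _ hI
      have hne : I.1 ≠ I₀ := fun h => hI (Subtype.ext h)
      have hex : ∃ i : Fin k, f i ∉ I.1 := by
        by_contra h
        push_neg at h
        have hsub : I₀ ⊆ I.1 := by
          intro x hx
          obtain ⟨i, _, rfl⟩ := Finset.mem_image.1 hx
          exact h i
        exact hne ((Finset.eq_of_subset_of_card_le hsub (by rw [I.2, hI₀card])).symm)
      obtain ⟨i, hi⟩ := hex
      simp only [map_mul, eval_C, map_prod, map_sub, eval_X, eval_C]
      have : (∏ i : Fin k, ∏ j ∈ I.1ᶜ, ((lam ∘ f) i - lam j)) = 0 := by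
        apply Finset.prod_eq_zero (Finset.mem_univ i)
        apply Finset.prod_eq_zero (Finset.mem_compl.2 hi)
        simp
      rw [this, mul_zero]
  have hzero : P - S = 0 := by
    apply chen_louck_aux_vanish lam hlam k (le_of_lt hk)
    · intro i
      exact le_trans (MvPolynomial.degreeOf_sub_le _ _ _) (max_le (hPdeg i) (hSdeg i))
    · exact hagree
  exact sub_eq_zero.1 hzero
end

section
/- Let P(x₁,…,x_k) be a symmetric polynomial of total degree at most k(n−k) over a field of characteristic zero, with k < n, and let λ₁,…,λₙ be distinct. Then ∑_{I⊂[n], |I|=k} P(λ_I) / ∏_{i∈I} ∏_{j∈Iᶜ}(λ_i−λ_j) = c(k,n)/k!, where c(k,n) is the coefficient of x₁^{n−1}⋯x_k^{n−1} in the polynomial P(x₁,…,x_k)·∏_{i=1}^k ∏_{j≠i}(x_i−x_j). -/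
open Finset MvPolynomial

theorem lagrange_power_sum {F : Type*} [Field F] (n : ℕ) (lam : Fin n → F)
    (hlam : Function.Injective lam) (m : ℕ) (hm : m < n) :
    ∑ a : Fin n, lam a ^ m / ∏ b ∈ univ.erase a, (lam a - lam b) =
      if m = n - 1 then 1 else 0 := by
  have hinj : Set.InjOn lam (univ : Finset (Fin n)) := fun x _ y _ h => hlam h
  have hdeg : (Polynomial.X ^ m : Polynomial F).degree < (#(univ : Finset (Fin n)) : ℕ) := by
    simpa [Polynomial.degree_X_pow] using (by exact_mod_cast hm :
      ((m : ℕ) : WithBot ℕ) < (n : WithBot ℕ))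
  have h := Lagrange.eq_interpolate (f := (Polynomial.X ^ m : Polynomial F)) hinj hdeg
  have hcoeff := congrArg (fun p : Polynomial F => p.coeff (n - 1)) h
  simp only [Lagrange.interpolate_apply, Polynomial.finset_sum_coeff] at hcoeff
  rw [Polynomial.coeff_X_pow] at hcoeff
  have key : ∀ a : Fin n,
      (Polynomial.C ((Polynomial.X ^ m : Polynomial F).eval (lam a)) *
          Lagrange.basis univ lam a).coeff (n - 1)
        = lam a ^ m / ∏ b ∈ univ.erase a, (lam a - lam b) := by
    intro a
    have hbasis : Lagrange.basis univ lam a =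
        Polynomial.C (∏ b ∈ univ.erase a, (lam a - lam b)⁻¹) *
          ∏ b ∈ univ.erase a, (Polynomial.X - Polynomial.C (lam b)) := by
      rw [Lagrange.basis, map_prod, ← Finset.prod_mul_distrib]
      rfl
    have hmonic : (∏ b ∈ univ.erase a,
        (Polynomial.X - Polynomial.C (lam b)) : Polynomial F).Monic :=
      Polynomial.monic_prod_of_monic _ _ fun b _ => Polynomial.monic_X_sub_C _
    have hnd : (∏ b ∈ univ.erase a,
        (Polynomial.X - Polynomial.C (lam b)) : Polynomial F).natDegree = n - 1 := by
      rw [Polynomial.natDegree_prod_of_monic _ _ fun b _ => Polynomial.monic_X_sub_C _]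
      simp [Polynomial.natDegree_X_sub_C, Finset.card_erase_of_mem]
    have hlc : (∏ b ∈ univ.erase a,
        (Polynomial.X - Polynomial.C (lam b)) : Polynomial F).coeff (n - 1) = 1 := by
      rw [← hnd]; exact hmonic.coeff_natDegree
    rw [hbasis, ← mul_assoc, ← Polynomial.C_mul, Polynomial.coeff_C_mul, hlc, mul_one,
      Polynomial.eval_pow, Polynomial.eval_X, Finset.prod_inv_distrib]
    rw [div_eq_mul_inv]
  rw [Finset.sum_congr rfl fun a _ => key a] at hcoeff
  rw [← hcoeff]
  simp [eq_comm]

theorem prod_erase_pairs_symm {F : Type*} [CommRing F] (k : ℕ) :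
    (∏ i : Fin k, ∏ j ∈ univ.erase i, (X i - X j) : MvPolynomial (Fin k) F).IsSymmetric := by
  intro σ
  have h1 : ∀ (f : Fin k → Fin k),
      (∏ i : Fin k, ∏ j ∈ univ.erase i, (X (f i) - X (f j)) : MvPolynomial (Fin k) F)
      = ∏ p : Fin k × Fin k, if p.2 ≠ p.1 then (X (f p.1) - X (f p.2)) else 1 := by
    intro f
    rw [Fintype.prod_prod_type]
    refine Finset.prod_congr rfl fun i _ => ?_
    rw [← Finset.filter_ne' univ i, Finset.prod_filter]
  have h2 : (rename σ) (∏ i : Fin k, ∏ j ∈ univ.erase i, (X i - X j) : MvPolynomial (Fin k) F)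
      = ∏ i : Fin k, ∏ j ∈ univ.erase i, (X (σ i) - X (σ j)) := by
    rw [map_prod]
    refine Finset.prod_congr rfl fun i _ => ?_
    rw [map_prod]
    refine Finset.prod_congr rfl fun j _ => ?_
    simp [map_sub]
  rw [h2, h1 ⇑σ, show (∏ i : Fin k, ∏ j ∈ univ.erase i, (X i - X j) : MvPolynomial (Fin k) F)
    = ∏ i : Fin k, ∏ j ∈ univ.erase i, (X (id i) - X (id j)) from rfl, h1 id]
  refine Fintype.prod_equiv (Equiv.prodCongr σ σ) _ _ fun p => ?_
  simp only [Equiv.prodCongr_apply, Prod.map, id_eq]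
  congr 1
  simp [EmbeddingLike.apply_eq_iff_eq]

theorem fiber_equiv_perm (n k : ℕ) (I : Finset (Fin n)) (hI : I.card = k) :
    ∃ e : Equiv.Perm (Fin k) ≃
        {f : {f : Fin k → Fin n // Function.Injective f} // univ.image f.1 = I},
      ∀ σ i, (e σ).1.1 i = (I.orderIsoOfFin hI (σ i) : Fin n) := by
  classical
  set ord : Fin k → Fin n := fun i => (I.orderIsoOfFin hI i : Fin n) with hord
  have hordInj : Function.Injective ord := fun i j h => by
    have := Subtype.coe_injective h
    exact (I.orderIsoOfFin hI).injective this
  have hordmem : ∀ i, ord i ∈ I := fun i => (I.orderIsoOfFin hI i).2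
  have himage : univ.image ord = I := by
    apply Finset.eq_of_subset_of_card_le
    · intro b hb
      obtain ⟨i, _, rfl⟩ := Finset.mem_image.1 hb
      exact hordmem i
    · rw [Finset.card_image_of_injective _ hordInj, card_univ, Fintype.card_fin, hI]
  have hTprop : ∀ σ : Equiv.Perm (Fin k), univ.image (ord ∘ ⇑σ) = I := by
    intro σ
    rw [← Finset.image_image, Finset.image_univ_equiv σ, himage]
  set T : Equiv.Perm (Fin k) →
      {f : {f : Fin k → Fin n // Function.Injective f} // univ.image f.1 = I} :=
    fun σ => ⟨⟨ord ∘ σ, hordInj.comp σ.injective⟩, hTprop σ⟩ with hT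
  have hbij : Function.Bijective T := by
    constructor
    · intro σ τ h
      have h2 : ord ∘ ⇑σ = ord ∘ ⇑τ := congrArg (fun x => x.1.1) h
      exact Equiv.ext fun i => hordInj (congrFun h2 i)
    · rintro ⟨⟨f, hf⟩, hgf⟩
      simp only [] at hgf
      have hfmem : ∀ i, f i ∈ I := by
        intro i; rw [← hgf]; exact Finset.mem_image_of_mem f (mem_univ i)
      set τ : Fin k → Fin k := fun i => (I.orderIsoOfFin hI).symm ⟨f i, hfmem i⟩ with hτdef
      have hτinj : Function.Injective τ := by
        intro i j h
        have := (I.orderIsoOfFin hI).symm.injective h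
        exact hf (congrArg Subtype.val this)
      refine ⟨Equiv.ofBijective τ (Finite.injective_iff_bijective.1 hτinj), ?_⟩
      refine Subtype.ext (Subtype.ext ?_)
      funext i
      show ord (τ i) = f i
      rw [hτdef]
      simp only [hord]
      rw [OrderIso.apply_symm_apply]
  exact ⟨Equiv.ofBijective T hbij, fun σ i => rfl⟩

theorem sum_symm_eval_div_prod {F : Type*} [Field F] [CharZero F]
    (n k : ℕ) (hk : k < n) (lam : Fin n → F) (hlam : Function.Injective lam)
    (P : MvPolynomial (Fin k) F) (hPsymm : P.IsSymmetric)
    (hPdeg : P.totalDegree ≤ k * (n - k)) :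
    ∑ I : {s : Finset (Fin n) // s.card = k},
        (MvPolynomial.eval (fun i => lam ((I.1.orderIsoOfFin I.2) i : Fin n)) P) /
          ∏ i ∈ I.1, ∏ j ∈ I.1ᶜ, (lam i - lam j) =
      (MvPolynomial.coeff (Finsupp.equivFunOnFinite.symm fun _ : Fin k => n - 1)
          (P * ∏ i : Fin k, ∏ j ∈ Finset.univ.erase i, (X i - X j))) /
        (Nat.factorial k : F) := by
  classical
  set V : MvPolynomial (Fin k) F := ∏ i : Fin k, ∏ j ∈ univ.erase i, (X i - X j) with hVdef
  set Q : MvPolynomial (Fin k) F := P * V with hQdef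
  have hQsymm : Q.IsSymmetric := fun σ => by
    rw [hQdef, map_mul, hPsymm σ, prod_erase_pairs_symm k σ]
  set w : Fin n → F := fun a => ∏ b ∈ univ.erase a, (lam a - lam b) with hwdef
  have hwne : ∀ a, w a ≠ 0 := by
    intro a
    refine Finset.prod_ne_zero_iff.2 fun b hb => sub_ne_zero.2 fun h => ?_
    exact (Finset.mem_erase.1 hb).1 (hlam h.symm)
  set rect : Fin k →₀ ℕ := Finsupp.equivFunOnFinite.symm fun _ : Fin k => n - 1 with hrectdef
  have hrect_apply : ∀ i, rect i = n - 1 := fun i => rfl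
  set G : (Fin k → Fin n) → F :=
    fun f => eval (fun i => lam (f i)) Q / ∏ i, w (f i) with hGdef
  -- total degree bound
  have hQdeg : Q.totalDegree ≤ k * (n - 1) := by
    have hVd : V.totalDegree ≤ k * (k - 1) := by
      refine (totalDegree_finset_prod _ _).trans ?_
      calc ∑ i : Fin k, (∏ j ∈ univ.erase i, (X i - X j) : MvPolynomial (Fin k) F).totalDegree
          ≤ ∑ _i : Fin k, (k - 1) := by
            refine Finset.sum_le_sum fun i _ => ?_
            refine (totalDegree_finset_prod _ _).trans ?_
            calc ∑ j ∈ univ.erase i, (X i - X j : MvPolynomial (Fin k) F).totalDegree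
                ≤ ∑ _j ∈ univ.erase i, 1 := by
                  refine Finset.sum_le_sum fun j _ => ?_
                  refine (totalDegree_sub _ _).trans ?_
                  simp [totalDegree_X]
              _ = k - 1 := by
                  simp [Finset.card_erase_of_mem]
        _ = k * (k - 1) := by simp [mul_comm]
    calc Q.totalDegree ≤ P.totalDegree + V.totalDegree := totalDegree_mul _ _
      _ ≤ k * (n - k) + k * (k - 1) := add_le_add hPdeg hVd
      _ = k * (n - 1) := by
          rcases Nat.eq_zero_or_pos k with h | h
          · simp [h]
          · rw [← Nat.mul_add]
            congr 1
            omega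
  -- key product computation
  have key_prod : ∀ d ∈ Q.support,
      (∏ i : Fin k, ∑ a, lam a ^ d i / w a) = if d = rect then 1 else 0 := by
    intro d hd
    have hsum : ∑ i, d i ≤ k * (n - 1) := by
      refine le_trans ?_ hQdeg
      have h := le_totalDegree hd
      rwa [Finsupp.sum_fintype _ _ (fun i => rfl)] at h
    by_cases hall : ∀ i, n - 1 ≤ d i
    · have heq : ∀ i, d i = n - 1 := by
        intro i
        by_contra hne
        have hlt : n - 1 < d i := lt_of_le_of_ne (hall i) (Ne.symm hne)
        have hgt : k * (n - 1) < ∑ j, d j := by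
          calc k * (n - 1) = ∑ _j : Fin k, (n - 1) := by simp [mul_comm]
            _ < ∑ j, d j := Finset.sum_lt_sum (fun j _ => hall j) ⟨i, mem_univ i, hlt⟩
        omega
      have hdr : d = rect := Finsupp.ext fun i => (heq i).trans (hrect_apply i).symm
      rw [if_pos hdr]
      refine Finset.prod_eq_one fun i _ => ?_
      rw [heq i]
      have h := lagrange_power_sum n lam hlam (n - 1) (by omega)
      rw [if_pos rfl] at h
      simpa [hwdef] using h
    · push_neg at hall
      obtain ⟨i0, hi0⟩ := hall
      have hz : ∑ a, lam a ^ d i0 / w a = 0 := by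
        have h := lagrange_power_sum n lam hlam (d i0) (by omega)
        rw [if_neg (by omega)] at h
        simpa [hwdef] using h
      rw [Finset.prod_eq_zero (mem_univ i0) hz, if_neg]
      intro h
      rw [h, hrect_apply i0] at hi0
      omega
  -- Step A : full sum equals the coefficient
  have stepA : ∑ f : Fin k → Fin n, G f = coeff rect Q := by
    have h1 : ∀ f : Fin k → Fin n,
        G f = ∑ d ∈ Q.support, coeff d Q * ∏ i, (lam (f i) ^ d i / w (f i)) := by
      intro f
      rw [hGdef]
      simp only []
      rw [eval_eq', Finset.sum_div]
      refine Finset.sum_congr rfl fun d _ => ?_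
      rw [mul_div_assoc, ← Finset.prod_div_distrib]
    rw [Finset.sum_congr rfl fun f _ => h1 f, Finset.sum_comm]
    have h2 : ∀ d, (∑ f : Fin k → Fin n, coeff d Q * ∏ i, (lam (f i) ^ d i / w (f i)))
        = coeff d Q * ∏ i : Fin k, ∑ a, lam a ^ d i / w a := by
      intro d
      rw [← Finset.mul_sum]
      congr 1
      rw [Finset.prod_univ_sum (fun _ => (univ : Finset (Fin n)))
        (fun i a => lam a ^ d i / w a), Fintype.piFinset_univ]
    rw [Finset.sum_congr rfl fun d _ => h2 d,
      Finset.sum_congr rfl fun d hd => by rw [key_prod d hd]]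
    simp only [mul_ite, mul_one, mul_zero]
    rw [Finset.sum_ite_eq' Q.support rect (fun d => coeff d Q)]
    by_cases h : rect ∈ Q.support
    · rw [if_pos h]
    · rw [if_neg h, MvPolynomial.notMem_support_iff.1 h]
  -- Step B : restrict to injective functions
  have stepB : ∑ f : Fin k → Fin n, G f
      = ∑ f : {f : Fin k → Fin n // Function.Injective f}, G f.1 := by
    have hne : ∀ f ∈ (univ : Finset (Fin k → Fin n)), G f ≠ 0 → Function.Injective f := by
      intro f _ hGf
      by_contra hninj
      apply hGf
      obtain ⟨i, j, hfij, hij⟩ := Function.not_injective_iff.1 hninj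
      rw [hGdef]
      simp only []
      have hQ0 : eval (fun i => lam (f i)) Q = 0 := by
        rw [hQdef, map_mul]
        have hV0 : eval (fun i => lam (f i)) V = 0 := by
          rw [hVdef, map_prod]
          refine Finset.prod_eq_zero (mem_univ i) ?_
          rw [map_prod]
          refine Finset.prod_eq_zero (Finset.mem_erase.2 ⟨Ne.symm hij, mem_univ j⟩) ?_
          simp [hfij]
        rw [hV0, mul_zero]
      rw [hQ0, zero_div]
    rw [← Finset.sum_filter_of_ne hne]
    exact Finset.sum_subtype _ (fun f => by simp) G
  -- Step C : fiberwise over images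
  have stepC : ∑ f : {f : Fin k → Fin n // Function.Injective f}, G f.1
      = ∑ I : {s : Finset (Fin n) // s.card = k},
          (k.factorial : F) * G (fun i => (I.1.orderIsoOfFin I.2 i : Fin n)) := by
    rw [← Fintype.sum_fiberwise (fun f : {f : Fin k → Fin n // Function.Injective f} =>
        (⟨univ.image f.1, by
            rw [Finset.card_image_of_injective _ f.2, card_univ, Fintype.card_fin]⟩ :
          {s : Finset (Fin n) // s.card = k})) (fun f => G f.1)]
    refine Finset.sum_congr rfl fun I _ => ?_
    obtain ⟨e, he⟩ := fiber_equiv_perm n k I.1 I.2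
    set e2 : {f : {f : Fin k → Fin n // Function.Injective f} // univ.image f.1 = I.1} ≃
        {f : {f : Fin k → Fin n // Function.Injective f} //
          (⟨univ.image f.1, by
              rw [Finset.card_image_of_injective _ f.2, card_univ, Fintype.card_fin]⟩ :
            {s : Finset (Fin n) // s.card = k}) = I} :=
      Equiv.subtypeEquivRight fun f => by
        constructor
        · intro h; exact Subtype.ext h
        · intro h; exact congrArg Subtype.val h
      with he2def
    rw [← Equiv.sum_comp (e.trans e2) (fun f => G f.1.1)]
    have h3 : ∀ σ : Equiv.Perm (Fin k),
        G (fun i => (I.1.orderIsoOfFin I.2 (σ i) : Fin n))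
          = G (fun i => (I.1.orderIsoOfFin I.2 i : Fin n)) := by
      intro σ
      rw [hGdef]
      simp only []
      congr 1
      · show eval ((fun i => lam ((I.1.orderIsoOfFin I.2 i : Fin n))) ∘ ⇑σ) Q
            = eval (fun i => lam ((I.1.orderIsoOfFin I.2 i : Fin n))) Q
        rw [← eval_rename, hQsymm σ]
      · exact Equiv.prod_comp σ (fun i => w ((I.1.orderIsoOfFin I.2 i : Fin n)))
    have h4 : ∀ σ : Equiv.Perm (Fin k),
        G ((e.trans e2) σ).1.1 = G (fun i => (I.1.orderIsoOfFin I.2 i : Fin n)) := by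
      intro σ
      have : ((e.trans e2) σ).1.1 = fun i => (I.1.orderIsoOfFin I.2 (σ i) : Fin n) := by
        funext i
        rw [Equiv.trans_apply, he2def, Equiv.subtypeEquivRight_apply]
        exact he σ i
      rw [this, h3 σ]
    rw [Finset.sum_congr rfl fun σ _ => h4 σ, Finset.sum_const, card_univ,
      Fintype.card_perm, Fintype.card_fin, nsmul_eq_mul]
  -- Step D : identify each term
  have stepD : ∀ I : {s : Finset (Fin n) // s.card = k},
      G (fun i => (I.1.orderIsoOfFin I.2 i : Fin n))
        = (MvPolynomial.eval (fun i => lam ((I.1.orderIsoOfFin I.2) i : Fin n)) P) /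
            ∏ i ∈ I.1, ∏ j ∈ I.1ᶜ, (lam i - lam j) := by
    intro I
    set ord : Fin k → Fin n := fun i => (I.1.orderIsoOfFin I.2 i : Fin n) with hord
    have hordInj : Function.Injective ord := fun i j h =>
      (I.1.orderIsoOfFin I.2).injective (Subtype.coe_injective h)
    have hordmem : ∀ i, ord i ∈ I.1 := fun i => (I.1.orderIsoOfFin I.2 i).2
    have himage : univ.image ord = I.1 := by
      apply Finset.eq_of_subset_of_card_le
      · intro b hb
        obtain ⟨i, _, rfl⟩ := Finset.mem_image.1 hb
        exact hordmem i
      · rw [Finset.card_image_of_injective _ hordInj, card_univ, Fintype.card_fin, I.2]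
    set E : F := ∏ a ∈ I.1, ∏ b ∈ I.1.erase a, (lam a - lam b) with hE
    have hEne : E ≠ 0 := by
      refine Finset.prod_ne_zero_iff.2 fun a ha => Finset.prod_ne_zero_iff.2 fun b hb => ?_
      exact sub_ne_zero.2 fun h => (Finset.mem_erase.1 hb).1 (hlam h.symm)
    have h1 : ∏ i : Fin k, w (ord i) = ∏ a ∈ I.1, w a := by
      rw [← himage, Finset.prod_image (fun i _ j _ h => hordInj h)]
    have hdenom : ∏ i : Fin k, w (ord i)
        = (∏ a ∈ I.1, ∏ b ∈ I.1ᶜ, (lam a - lam b)) * E := by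
      rw [h1, hE, ← Finset.prod_mul_distrib]
      refine Finset.prod_congr rfl fun a ha => ?_
      rw [hwdef]
      simp only []
      have hdisj : Disjoint (I.1ᶜ) (I.1.erase a) :=
        disjoint_compl_left.mono_right (Finset.erase_subset a I.1)
      rw [← Finset.prod_union hdisj]
      congr 1
      ext b
      simp only [Finset.mem_erase, Finset.mem_union, Finset.mem_compl, Finset.mem_univ,
        and_true, true_and]
      constructor
      · intro hba
        by_cases hbI : b ∈ I.1
        · exact Or.inr ⟨hba, hbI⟩
        · exact Or.inl hbI
      · rintro (h | ⟨h, _⟩)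
        · exact fun he => h (he ▸ ha)
        · exact h
    have hevalV : eval (fun i => lam (ord i)) V = E := by
      rw [hVdef, hE, map_prod, ← himage,
        Finset.prod_image (fun i _ j _ h => hordInj h)]
      refine Finset.prod_congr rfl fun i _ => ?_
      rw [map_prod, ← Finset.image_erase hordInj,
        Finset.prod_image (fun x _ y _ h => hordInj h)]
      refine Finset.prod_congr rfl fun j _ => ?_
      simp
    rw [hGdef]
    simp only []
    rw [hQdef, map_mul, hevalV, hdenom, mul_div_mul_right _ _ hEne]
  have hfact : (k.factorial : F) ≠ 0 := Nat.cast_ne_zero.2 k.factorial_ne_zero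
  have := stepA.symm.trans (stepB.trans stepC)
  rw [Finset.sum_congr rfl fun I _ => congrArg _ (stepD I), ← Finset.mul_sum] at this
  rw [eq_div_iff hfact, mul_comm]
  exact this.symm
end

section
/- Let P(x₁,…,x_k) be a symmetric polynomial of total degree strictly less than k(n−k) over a field of characteristic zero, with k < n, and let λ₁,…,λₙ be distinct. Then ∑_{I⊂[n], |I|=k} P(λ_I) / ∏_{i∈I} ∏_{j∈Iᶜ}(λ_i−λ_j) = 0. -/
/-!
Put `D = ∏_{a ≠ b} (X_a - X_b)` and `w i = ∏_{j ≠ i} (λ_i - λ_j)`. The symmetric polynomial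
`Q = P * D` has total degree `< k (n - 1)`, so every monomial of `Q` has some exponent
`d < n - 1`. Summing `Q(λ_{f 1}, …, λ_{f k}) / ∏_a w (f a)` over all maps `f : [k] → [n]`
therefore gives `0`: the sum splits monomialwise into products of sums `∑_i λ_i ^ d / w i`,
and such a sum is the coefficient of `X ^ (n - 1)` in the Lagrange interpolant of `X ^ d`,
which is `X ^ d` itself. On the other hand `D` kills the non-injective `f`, every `k`-subset `I`
is the image of exactly `k!` injective `f`, and for each of them `D(λ_I)` cancels the factors
`λ_i - λ_j` with `i, j ∈ I` of `∏_{i ∈ I} w i`. Hence the sum is `k!` times the sum in the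
theorem.
-/

open Finset MvPolynomial

theorem Lagrange.sum_pow_div_prod_sub_eq_zero {F ι : Type*} [Field F] [DecidableEq ι]
    {s : Finset ι} {v : ι → F} (hvs : Set.InjOn v s) {d : ℕ} (hd : d + 1 < #s) :
    ∑ i ∈ s, v i ^ d / ∏ j ∈ s.erase i, (v i - v j) = 0 := by
  have hdeg : (Polynomial.X ^ d : Polynomial F).degree < #s := by
    rw [Polynomial.degree_X_pow]; exact_mod_cast (by omega : d < #s)
  have := Lagrange.coeff_eq_sum hvs hdeg
  rw [Polynomial.coeff_X_pow, if_neg (by omega)] at this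
  simpa using this.symm

theorem Finset.prod_prod_erase_map {α β M : Type*} [CommMonoid M] [DecidableEq α]
    [DecidableEq β] (s : Finset α) (e : α ↪ β) (f : β → β → M) :
    ∏ i ∈ s.map e, ∏ j ∈ (s.map e).erase i, f i j = ∏ a ∈ s, ∏ b ∈ s.erase a, f (e a) (e b) := by
  rw [prod_map]
  refine prod_congr rfl fun a _ => ?_
  rw [← map_erase, prod_map]

theorem Finset.prod_prod_erase_univ_eq_mul {α M : Type*} [CommMonoid M] [Fintype α]
    [DecidableEq α] (s : Finset α) (f : α → α → M) :
    ∏ i ∈ s, ∏ j ∈ univ.erase i, f i j =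
      (∏ i ∈ s, ∏ j ∈ s.erase i, f i j) * ∏ i ∈ s, ∏ j ∈ sᶜ, f i j := by
  rw [← prod_mul_distrib]
  refine prod_congr rfl fun i hi => ?_
  rw [← prod_filter_mul_prod_filter_not (univ.erase i) (· ∈ s)]
  congr 2 <;> ext j <;> by_cases j = i <;> aesop

theorem Finset.orderEmbOfFin_comp_sort {α : Type*} [LinearOrder α] {k : ℕ} {f : Fin k → α}
    (hf : Function.Injective f) (hI : (univ.image f).card = k) :
    ⇑((univ.image f).orderEmbOfFin hI) = f ∘ Tuple.sort f :=
  (orderEmbOfFin_unique hI (fun _ => mem_image_of_mem f (mem_univ _))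
    ((Tuple.monotone_sort f).strictMono_of_injective (hf.comp (Tuple.sort f).injective))).symm

theorem Finset.sum_eq_factorial_smul_sum_orderEmbOfFin {α M : Type*} [Fintype α]
    [LinearOrder α] [AddCommMonoid M] {k : ℕ} (g : (Fin k → α) → M)
    (hg : ∀ f, ¬ Function.Injective f → g f = 0)
    (hperm : ∀ f (τ : Equiv.Perm (Fin k)), g (f ∘ τ) = g f) :
    ∑ f, g f = k.factorial • ∑ I : {s : Finset α // s.card = k}, g (I.1.orderEmbOfFin I.2) := by
  classical
  have hinj (I : {s : Finset α // s.card = k}) (τ : Equiv.Perm (Fin k)) :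
      Function.Injective (I.1.orderEmbOfFin I.2 ∘ τ) :=
    (I.1.orderEmbOfFin I.2).injective.comp τ.injective
  have hrange (I : {s : Finset α // s.card = k}) (τ : Equiv.Perm (Fin k)) :
      Set.range (I.1.orderEmbOfFin I.2 ∘ τ) = I.1 := by
    rw [τ.surjective.range_comp, range_orderEmbOfFin]
  calc ∑ f, g f = ∑ f with Function.Injective f, g f :=
        (sum_filter_of_ne fun f _ hf => by_contra fun h => hf (hg f h)).symm
    _ = ∑ p : {s : Finset α // s.card = k} × Equiv.Perm (Fin k),
          g (p.1.1.orderEmbOfFin p.1.2 ∘ p.2) := by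
        refine (sum_bij (fun p _ => p.1.1.orderEmbOfFin p.1.2 ∘ p.2)
          (fun p _ => mem_filter.mpr ⟨mem_univ _, hinj p.1 p.2⟩) ?_ ?_ fun _ _ => rfl).symm
        · rintro ⟨I, τ⟩ - ⟨J, υ⟩ - h
          obtain rfl : I = J :=
            Subtype.ext (coe_injective (by rw [← hrange I τ, ← hrange J υ, h]))
          simp only [Prod.mk.injEq, true_and]
          exact Equiv.ext fun a => (I.1.orderEmbOfFin I.2).injective (congrFun h a)
        · intro f hf
          have hf := (mem_filter.mp hf).2
          have hI : (univ.image f).card = k := by rw [card_image_of_injective _ hf]; simp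
          refine ⟨(⟨univ.image f, hI⟩, (Tuple.sort f)⁻¹), mem_univ _, ?_⟩
          simp [orderEmbOfFin_comp_sort hf hI, Function.comp_assoc]
    _ = _ := by
        rw [Fintype.sum_prod_type' (f := fun (I : {s : Finset α // s.card = k})
          (τ : Equiv.Perm (Fin k)) => g (I.1.orderEmbOfFin I.2 ∘ τ)), smul_sum]
        simp only [hperm, sum_const, card_univ, Fintype.card_perm, Fintype.card_fin]

namespace MvPolynomial

theorem exists_lt_of_mem_support_of_totalDegree_lt {R σ : Type*} [CommSemiring R]
    [Fintype σ] {Q : MvPolynomial σ R} {m : ℕ} (hQ : Q.totalDegree < Fintype.card σ * m)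
    {d : σ →₀ ℕ} (hd : d ∈ Q.support) : ∃ a, d a < m := by
  by_contra! h
  have := le_totalDegree hd
  rw [Finsupp.sum_fintype _ _ fun _ => rfl] at this
  have := Finset.card_nsmul_le_sum univ (fun a => d a) m fun a _ => h a
  simp only [card_univ, smul_eq_mul] at this
  omega

theorem sum_eval_comp_div_prod_sub_eq_zero {F σ ι : Type*} [Field F] [Fintype σ]
    [DecidableEq σ] [Fintype ι] [DecidableEq ι] {v : ι → F} (hv : Function.Injective v)
    {Q : MvPolynomial σ F}
    (hQ : Q.totalDegree < Fintype.card σ * (Fintype.card ι - 1)) :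
    ∑ f : σ → ι, eval (v ∘ f) Q / ∏ a, ∏ j ∈ univ.erase (f a), (v (f a) - v j) = 0 := by
  calc ∑ f : σ → ι, eval (v ∘ f) Q / ∏ a, ∏ j ∈ univ.erase (f a), (v (f a) - v j)
      = ∑ d ∈ Q.support, Q.coeff d *
          ∏ a, ∑ i, v i ^ d a / ∏ j ∈ univ.erase i, (v i - v j) := by
        simp_rw [Fintype.prod_sum, Finset.mul_sum, eval_eq', Finset.sum_div]
        rw [Finset.sum_comm]
        refine sum_congr rfl fun d _ => sum_congr rfl fun f _ => ?_
        rw [mul_div_assoc, ← prod_div_distrib]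
        rfl
    _ = 0 := sum_eq_zero fun d hd => by
        obtain ⟨a, ha⟩ := exists_lt_of_mem_support_of_totalDegree_lt hQ hd
        refine mul_eq_zero_of_right _ (prod_eq_zero (mem_univ a) ?_)
        exact Lagrange.sum_pow_div_prod_sub_eq_zero hv.injOn (by simp only [card_univ]; omega)

variable (σ R : Type*) [Fintype σ] [DecidableEq σ] [CommRing R]

noncomputable def pairwiseDiffProd : MvPolynomial σ R :=
  ∏ a, ∏ b ∈ univ.erase a, (X a - X b)

variable {σ R}

theorem eval_pairwiseDiffProd (x : σ → R) :
    eval x (pairwiseDiffProd σ R) = ∏ a, ∏ b ∈ univ.erase a, (x a - x b) := by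
  simp [pairwiseDiffProd]

theorem isSymmetric_pairwiseDiffProd : (pairwiseDiffProd σ R).IsSymmetric := fun τ => by
  simp only [pairwiseDiffProd, map_prod, map_sub, rename_X]
  simpa using
    (prod_prod_erase_map univ τ.toEmbedding fun i j => (X i - X j : MvPolynomial σ R)).symm

theorem totalDegree_pairwiseDiffProd_le :
    (pairwiseDiffProd σ R).totalDegree ≤ Fintype.card σ * (Fintype.card σ - 1) := by
  have hX (a : σ) : (X a : MvPolynomial σ R).totalDegree ≤ 1 :=
    (totalDegree_monomial_le (Finsupp.single a 1) (1 : R)).trans (by simp)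
  have hfactor (a b : σ) : (X a - X b : MvPolynomial σ R).totalDegree ≤ 1 :=
    (totalDegree_sub _ _).trans (max_le (hX a) (hX b))
  have hrow (a : σ) : (∏ b ∈ univ.erase a, (X a - X b : MvPolynomial σ R)).totalDegree ≤
      Fintype.card σ - 1 := by
    refine (totalDegree_finsetProd _ _).trans
      ((sum_le_card_nsmul _ _ 1 fun b _ => hfactor a b).trans ?_)
    simp [card_erase_of_mem]
  refine (totalDegree_finsetProd _ _).trans ((sum_le_card_nsmul _ _ _ fun a _ => hrow a).trans ?_)
  simp

theorem eval_pairwiseDiffProd_eq_zero {x : σ → R} (hx : ¬ Function.Injective x) :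
    eval x (pairwiseDiffProd σ R) = 0 := by
  obtain ⟨a, b, hab, hne⟩ := Function.not_injective_iff.mp hx
  rw [eval_pairwiseDiffProd]
  exact prod_eq_zero (mem_univ a) (prod_eq_zero (mem_erase.mpr ⟨hne.symm, mem_univ b⟩)
    (sub_eq_zero.mpr hab))

theorem eval_comp_pairwiseDiffProd {τ : Type*} [DecidableEq τ] (x : τ → R) (e : σ ↪ τ) :
    eval (x ∘ e) (pairwiseDiffProd σ R) =
      ∏ i ∈ univ.map e, ∏ j ∈ (univ.map e).erase i, (x i - x j) := by
  rw [eval_pairwiseDiffProd, prod_prod_erase_map]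
  rfl

theorem eval_mul_pairwiseDiffProd_div {F α : Type*} [Field F] [Fintype α]
    [DecidableEq α] {lam : α → F} (hlam : Function.Injective lam) (P : MvPolynomial σ F)
    (e : σ ↪ α) :
    eval (lam ∘ e) (P * pairwiseDiffProd σ F) /
        ∏ a, ∏ j ∈ univ.erase (e a), (lam (e a) - lam j) =
      eval (lam ∘ e) P / ∏ i ∈ univ.map e, ∏ j ∈ (univ.map e)ᶜ, (lam i - lam j) := by
  have hne : ∏ i ∈ univ.map e, ∏ j ∈ (univ.map e).erase i, (lam i - lam j) ≠ 0 :=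
    prod_ne_zero_iff.mpr fun i _ => prod_ne_zero_iff.mpr fun j hj =>
      sub_ne_zero.mpr (hlam.ne (ne_of_mem_erase hj).symm)
  rw [← prod_map univ e fun i => ∏ j ∈ univ.erase i, (lam i - lam j), map_mul,
    eval_comp_pairwiseDiffProd, prod_prod_erase_univ_eq_mul, mul_comm (eval _ P),
    mul_div_mul_left _ _ hne]

end MvPolynomial

theorem sum_symm_eval_div_prod_eq_zero_general {F : Type*} [Field F] [CharZero F]
    (n k : ℕ) (lam : Fin n → F) (hlam : Function.Injective lam)
    (P : MvPolynomial (Fin k) F) (hPsymm : P.IsSymmetric)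
    (hPdeg : P.totalDegree < k * (n - k)) :
    ∑ I : {s : Finset (Fin n) // s.card = k},
        (MvPolynomial.eval (fun i => lam ((I.1.orderIsoOfFin I.2) i : Fin n)) P) /
          ∏ i ∈ I.1, ∏ j ∈ I.1ᶜ, (lam i - lam j) = 0 := by
  obtain ⟨hk, hkn⟩ : 0 < k ∧ 0 < n - k :=
    CanonicallyOrderedAdd.mul_pos.mp ((Nat.zero_le _).trans_lt hPdeg)
  have hD : (pairwiseDiffProd (Fin k) F).totalDegree ≤ k * (k - 1) := by
    simpa using totalDegree_pairwiseDiffProd_le (σ := Fin k) (R := F)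
  have hQdeg : (P * pairwiseDiffProd (Fin k) F).totalDegree <
      Fintype.card (Fin k) * (Fintype.card (Fin n) - 1) := by
    calc _ ≤ P.totalDegree + k * (k - 1) :=
          (totalDegree_mul _ _).trans (Nat.add_le_add_left hD _)
      _ < k * (n - k) + k * (k - 1) := by omega
      _ = _ := by rw [← mul_add, Fintype.card_fin, Fintype.card_fin]; congr 1; omega
  have hsum := sum_eval_comp_div_prod_sub_eq_zero hlam hQdeg
  rw [sum_eq_factorial_smul_sum_orderEmbOfFin _ (fun f hf => ?vanish) (fun f τ => ?perm),
    smul_eq_zero] at hsum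
  · refine (sum_congr rfl fun I _ => ?_).trans (hsum.resolve_left (Nat.factorial_ne_zero k))
    have := eval_mul_pairwiseDiffProd_div hlam P (I.1.orderEmbOfFin I.2).toEmbedding
    rw [map_orderEmbOfFin_univ] at this
    exact this.symm
  · rw [map_mul, eval_pairwiseDiffProd_eq_zero fun h => hf h.of_comp, mul_zero, zero_div]
  · rw [← Function.comp_assoc, ← eval_rename, (hPsymm.mul isSymmetric_pairwiseDiffProd) τ]
    congr 1
    exact Equiv.prod_comp τ fun a => ∏ j ∈ univ.erase (f a), (lam (f a) - lam j)

theorem sum_symm_eval_div_prod_eq_zero {F : Type*} [Field F] [CharZero F]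
    (n k : ℕ) (hk : k < n) (lam : Fin n → F) (hlam : Function.Injective lam)
    (P : MvPolynomial (Fin k) F) (hPsymm : P.IsSymmetric)
    (hPdeg : P.totalDegree < k * (n - k)) :
    ∑ I : {s : Finset (Fin n) // s.card = k},
        (MvPolynomial.eval (fun i => lam ((I.1.orderIsoOfFin I.2) i : Fin n)) P) /
          ∏ i ∈ I.1, ∏ j ∈ I.1ᶜ, (lam i - lam j) = 0 :=
  sum_symm_eval_div_prod_eq_zero_general n k lam hlam P hPsymm hPdeg
end

section
/- The coefficient of x₁^{k−1} x₂^{k−1} ⋯ x_k^{k−1} in the polynomial ∏_{i=1}^k ∏_{j≠i} (x_i − x_j) (product over ordered pairs i ≠ j in {1,…,k}) equals k!. -/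
open Finset MvPolynomial

/-!
Splitting the ordered pairs `i ≠ j` by `i < j` and `i > j`, the product becomes
`∏_{i<j} (x_i - x_j) · ∏_{i<j} (x_j - x_i) = det (x_i ^ (k-1-j)) · det (x_i ^ j)`.
In the Leibniz expansion, the pair `(σ, τ)` of permutations yields the monomial in which
`x_m` has exponent `(k-1 - σ⁻¹ m) + τ⁻¹ m`; this is `k-1` for every `m` exactly when `σ = τ`,
and then the sign is `sign σ ^ 2 = 1`. So the coefficient is the number of permutations, `k!`.
-/

theorem prod_prod_erase_eq_prod_Ioi_mul_prod_Ioi {ι M : Type*} [Fintype ι] [LinearOrder ι]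
    [LocallyFiniteOrderTop ι] [LocallyFiniteOrderBot ι] [CommMonoid M] (f : ι → ι → M) :
    ∏ i, ∏ j ∈ univ.erase i, f i j = (∏ i, ∏ j ∈ Ioi i, f i j) * ∏ i, ∏ j ∈ Ioi i, f j i := by
  have herase (i : ι) : univ.erase i = Ioi i ∪ Iio i := by
    ext j
    simp [lt_or_lt_iff_ne, ne_comm]
  have hdisj (i : ι) : Disjoint (Ioi i) (Iio i) :=
    disjoint_left.2 fun j hi hj => lt_asymm (mem_Ioi.1 hi) (mem_Iio.1 hj)
  have hswap : ∏ i, ∏ j ∈ Iio i, f i j = ∏ i, ∏ j ∈ Ioi i, f j i :=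
    prod_comm' fun i j => by simp
  simp only [herase, prod_union (hdisj _), prod_mul_distrib, hswap]

theorem Matrix.det_of_pow_rev {R : Type*} [CommRing R] {n : ℕ} (v : Fin n → R) :
    (Matrix.of fun i j : Fin n => v i ^ (j.rev : ℕ)).det = ∏ i, ∏ j ∈ Ioi i, (v i - v j) := by
  have h : Matrix.projVandermonde 1 v = Matrix.of fun i j : Fin n => v i ^ (j.rev : ℕ) := by
    ext i j
    simp [Matrix.projVandermonde_apply]
  rw [← h, Matrix.det_projVandermonde]
  simp

section Alternant

variable {ι R : Type*} [Fintype ι] [CommRing R]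

theorem monomial_equivFunOnFinite_symm (e : ι → ℕ) :
    monomial (Finsupp.equivFunOnFinite.symm e) (1 : R) = ∏ i, X i ^ e i := by
  rw [monomial_eq, C_1, one_mul, Finsupp.prod_fintype _ _ fun _ => pow_zero _]
  rfl

theorem det_of_X_pow [DecidableEq ι] (e : ι → ℕ) :
    (Matrix.of fun i j => (X i : MvPolynomial ι R) ^ e j).det =
      ∑ σ : Equiv.Perm ι,
        Equiv.Perm.sign σ • monomial (Finsupp.equivFunOnFinite.symm (e ∘ σ.symm)) 1 := by
  rw [Matrix.det_apply]
  refine sum_congr rfl fun σ _ => ?_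
  rw [monomial_equivFunOnFinite_symm, ← Equiv.prod_comp σ fun i => X i ^ (e ∘ σ.symm) i]
  simp

theorem equivFunOnFinite_symm_add_eq_const_iff {e f : ι → ℕ} {c : ℕ}
    (he : Function.Injective e) (hef : ∀ j, e j + f j = c) (σ τ : Equiv.Perm ι) :
    Finsupp.equivFunOnFinite.symm (e ∘ σ.symm) + Finsupp.equivFunOnFinite.symm (f ∘ τ.symm) =
        Finsupp.equivFunOnFinite.symm (fun _ => c) ↔ σ = τ := by
  refine ⟨fun h => ?_, fun h => ?_⟩
  · rw [← inv_inj]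
    ext i
    have hi := DFunLike.congr_fun h i
    simp only [Finsupp.add_apply, Finsupp.coe_equivFunOnFinite_symm, Function.comp_apply] at hi
    rw [Equiv.Perm.inv_def, Equiv.Perm.inv_def]
    exact he (by linarith [hef (τ.symm i)])
  · subst h
    ext i
    simp [hef]

theorem coeff_det_of_X_pow_mul_det_of_X_pow [DecidableEq ι] {e f : ι → ℕ} {c : ℕ}
    (he : Function.Injective e) (hef : ∀ j, e j + f j = c) :
    coeff (Finsupp.equivFunOnFinite.symm fun _ => c)
        ((Matrix.of fun i j => (X i : MvPolynomial ι R) ^ e j).det *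
          (Matrix.of fun i j => (X i : MvPolynomial ι R) ^ f j).det) =
      (Fintype.card ι).factorial := by
  simp only [det_of_X_pow, sum_mul_sum, coeff_sum, smul_mul_smul_comm, monomial_mul, one_mul,
    coeff_smul, coeff_monomial, equivFunOnFinite_symm_add_eq_const_iff he hef]
  simp [Int.units_mul_self, Fintype.card_perm]

end Alternant

theorem coeff_prod_differences_general {F : Type*} [Field F] (k : ℕ) :
    MvPolynomial.coeff (Finsupp.equivFunOnFinite.symm fun _ : Fin k => k - 1)
        (∏ i : Fin k, ∏ j ∈ Finset.univ.erase i, (X i - X j) : MvPolynomial (Fin k) F) =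
      (Nat.factorial k : F) := by
  rw [prod_prod_erase_eq_prod_Ioi_mul_prod_Ioi, ← Matrix.det_of_pow_rev,
    ← Matrix.det_vandermonde, Matrix.vandermonde,
    coeff_det_of_X_pow_mul_det_of_X_pow (e := fun j : Fin k => (j.rev : ℕ))
      (Fin.val_injective.comp Fin.rev_injective) fun j => by rw [Fin.val_rev]; omega,
    Fintype.card_fin]

theorem coeff_prod_differences {F : Type*} [Field F] [CharZero F] (k : ℕ) :
    MvPolynomial.coeff (Finsupp.equivFunOnFinite.symm fun _ : Fin k => k - 1)
        (∏ i : Fin k, ∏ j ∈ Finset.univ.erase i, (X i - X j) : MvPolynomial (Fin k) F) =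
      (Nat.factorial k : F) :=
  coeff_prod_differences_general k
end

section
/- Let λ₁,…,λₙ be distinct elements of a field of characteristic zero and k < n. Then ∑_{I⊂[n], |I|=k} 1/∏_{i∈I}∏_{j∈Iᶜ}(λ_i−λ_j) = 0 when k(n−k) > 0, i.e., the sum over all k-subsets of the reciprocal of the product of differences vanishes whenever 0 < k < n and n ≥ 2. -/
/-!
With the nodal weights `w i = ∏_{j ≠ i} (λ_i - λ_j)⁻¹`, the term of a `k`-subset `I` is
`∏_{i ∈ I} w i · ∏_{i ≠ j ∈ I} (λ_i - λ_j)`. Summing instead over all maps `g : Fin k → [n]`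
(the non-injective ones contribute zero) multiplies the sum by `k!` and turns it into
`∑_g ∏_a w (g a) · D(λ ∘ g)` with `D = ∏_{a ≠ b} (X_a - X_b)`. Since `D` is homogeneous of degree
`k (k - 1)`, every monomial of `D` has some exponent `e < k ≤ n - 1`, and the sum over `g` of that
monomial factors through `∑_i w i λ_i ^ e`, which is the coefficient of `X ^ (n - 1)` in the
Lagrange interpolant of `X ^ e`, hence zero.
-/

open Finset Nat

namespace Lagrange

variable {F ι : Type*} [Field F] [DecidableEq ι] {s : Finset ι} {v : ι → F}

theorem sum_nodalWeight_mul_pow_eq_zero (hvs : Set.InjOn v s) {m : ℕ} (hm : m + 1 < #s) :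
    ∑ i ∈ s, nodalWeight s v i * v i ^ m = 0 := by
  have hcoeff := coeff_eq_sum hvs (P := Polynomial.X ^ m) (by
    rw [Polynomial.degree_X_pow]; exact_mod_cast (lt_add_one m).trans hm)
  rw [Polynomial.coeff_X_pow, if_neg (by omega)] at hcoeff
  simp_rw [hcoeff, nodalWeight, prod_inv_distrib, Polynomial.eval_X_pow, div_eq_inv_mul]

theorem inv_prod_prod_sdiff_sub (hvs : Set.InjOn v s) {I : Finset ι} (hI : I ⊆ s) :
    (∏ i ∈ I, ∏ j ∈ s \ I, (v i - v j))⁻¹ =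
      ∏ i ∈ I, (nodalWeight s v i * ∏ j ∈ I.erase i, (v i - v j)) := by
  rw [← prod_inv_distrib]
  refine prod_congr rfl fun i hi => ?_
  have hsplit : (∏ j ∈ s \ I, (v i - v j)) * ∏ j ∈ I.erase i, (v i - v j) =
      ∏ j ∈ s.erase i, (v i - v j) := by
    rw [← prod_sdiff (erase_subset_erase i hI)]
    congr 2
    ext j
    simp only [mem_sdiff, mem_erase]
    grind
  have hne : ∏ j ∈ I.erase i, (v i - v j) ≠ 0 :=
    prod_ne_zero_iff.mpr fun j hj => sub_ne_zero.mpr fun h =>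
      (ne_of_mem_erase hj) (hvs (hI (mem_of_mem_erase hj)) (hI hi) h.symm)
  rw [nodalWeight, prod_inv_distrib, ← hsplit, mul_inv, mul_assoc, inv_mul_cancel₀ hne, mul_one]

end Lagrange

namespace MvPolynomial

variable {σ ι R : Type*} [Fintype σ] [DecidableEq σ] [Fintype ι]

theorem sum_prod_mul_eval_comp_eq_zero [CommSemiring R] (w x : ι → R) (p : MvPolynomial σ R)
    (hp : ∀ d ∈ p.support, ∃ a, ∑ i, w i * x i ^ d a = 0) :
    ∑ g : σ → ι, (∏ a, w (g a)) * eval (x ∘ g) p = 0 := by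
  simp_rw [eval_eq', mul_sum, Function.comp_apply]
  rw [sum_comm]
  refine sum_eq_zero fun d hd => ?_
  obtain ⟨a, ha⟩ := hp d hd
  have hfactor : ∑ g : σ → ι, (∏ a, w (g a)) * (coeff d p * ∏ a, x (g a) ^ d a) =
      coeff d p * ∏ a, ∑ i, w i * x i ^ d a := by
    rw [Fintype.prod_sum, mul_sum]
    refine sum_congr rfl fun g _ => ?_
    rw [prod_mul_distrib]
    ring
  rw [hfactor, prod_eq_zero (mem_univ a) ha, mul_zero]

theorem isHomogeneous_prod_prod_erase_X_sub_X [CommRing R] :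
    IsHomogeneous (∏ a : σ, ∏ b ∈ univ.erase a, (X a - X b) : MvPolynomial σ R)
      (Fintype.card σ * (Fintype.card σ - 1)) := by
  have h := IsHomogeneous.prod (R := R) univ (fun a : σ => ∏ b ∈ univ.erase a, (X a - X b))
    (fun a => ∑ b ∈ univ.erase a, 1) fun a _ =>
      IsHomogeneous.prod _ _ _ fun b _ => (isHomogeneous_X R a).sub (isHomogeneous_X R b)
  simpa [card_erase_of_mem] using h

end MvPolynomial

section Symmetrization

variable {ι : Type*} [Fintype ι] [DecidableEq ι]

theorem card_filter_injective_image_eq {k : ℕ} {S : Finset ι} (hS : #S = k) :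
    #{g : Fin k → ι | g.Injective ∧ univ.image g = S} = k ! := by
  have hequiv : #(univ : Finset (Fin k ≃ S)) =
      #{g : Fin k → ι | g.Injective ∧ univ.image g = S} := by
    refine card_bij (fun e _ a => (e a : ι)) (fun e _ => ?_) (fun e₁ _ e₂ _ h =>
      Equiv.ext fun a => Subtype.ext (congrFun h a)) fun g hg => ?_
    · refine mem_filter.mpr ⟨mem_univ _, fun a b h => e.injective (Subtype.ext h), ?_⟩
      ext x
      simp only [mem_image, mem_univ, true_and]
      exact ⟨by rintro ⟨a, rfl⟩; exact (e a).2, fun hx => ⟨e.symm ⟨x, hx⟩, by simp⟩⟩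
    · obtain ⟨hinj, himage⟩ := (mem_filter.mp hg).2
      have hmem : ∀ a, g a ∈ S := fun a => himage ▸ mem_image_of_mem g (mem_univ a)
      refine ⟨Equiv.ofBijective (fun a => ⟨g a, hmem a⟩) ⟨fun a b h => hinj congr(($h).1), ?_⟩,
        mem_univ _, rfl⟩
      rintro ⟨x, hx⟩
      obtain ⟨a, -, rfl⟩ := mem_image.mp (himage ▸ hx)
      exact ⟨a, rfl⟩
  rw [← hequiv, Finset.card_univ, Fintype.card_equiv (S.equivFinOfCardEq hS).symm,
    Fintype.card_fin]

theorem sum_filter_injective_image {M : Type*} [AddCommMonoid M] (k : ℕ) (H : Finset ι → M) :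
    ∑ g : Fin k → ι with g.Injective, H (univ.image g) = k ! • ∑ S ∈ powersetCard k univ, H S := by
  rw [← sum_fiberwise_of_maps_to (t := powersetCard k univ) (g := fun g => univ.image g)
    fun g hg => mem_powersetCard_univ.mpr ((card_image_of_injective _ (mem_filter.mp hg).2).trans
      (card_fin k)), smul_sum]
  refine sum_congr rfl fun S hS => ?_
  rw [sum_congr rfl fun g hg => congrArg H (mem_filter.mp hg).2, sum_const, filter_filter,
    card_filter_injective_image_eq (mem_powersetCard_univ.mp hS)]

theorem sum_fun_prod_mul_prod_erase_sub {R : Type*} [CommRing R] (k : ℕ) (w x : ι → R) :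
    ∑ g : Fin k → ι, ∏ a, (w (g a) * ∏ b ∈ univ.erase a, (x (g a) - x (g b))) =
      k ! • ∑ S ∈ powersetCard k univ, ∏ i ∈ S, (w i * ∏ j ∈ S.erase i, (x i - x j)) := by
  rw [← sum_filter_injective_image,
    ← sum_filter_of_ne (p := Function.Injective) fun g _ hg => ?_]
  · refine sum_congr rfl fun g hg => ?_
    have hinj := (mem_filter.mp hg).2
    rw [prod_image hinj.injOn]
    refine prod_congr rfl fun a _ => ?_
    rw [← image_erase hinj, prod_image hinj.injOn]
  · contrapose! hg
    obtain ⟨a, b, hgab, hab⟩ := Function.not_injective_iff.mp hg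
    exact prod_eq_zero (mem_univ a) (mul_eq_zero_of_right _ (prod_eq_zero
      (mem_erase.mpr ⟨hab.symm, mem_univ b⟩) (by rw [hgab, sub_self])))

end Symmetrization

open MvPolynomial in
theorem sum_fun_prod_mul_prod_erase_sub_eq_zero {σ ι R : Type*} [Fintype σ] [DecidableEq σ]
    [Nonempty σ] [Fintype ι] [CommRing R] (w x : ι → R)
    (hw : ∀ m < Fintype.card σ, ∑ i, w i * x i ^ m = 0) :
    ∑ g : σ → ι, ∏ a, (w (g a) * ∏ b ∈ univ.erase a, (x (g a) - x (g b))) = 0 := by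
  set c := Fintype.card σ
  have heval : ∀ g : σ → ι, ∏ a, ∏ b ∈ univ.erase a, (x (g a) - x (g b)) =
      eval (x ∘ g) (∏ a : σ, ∏ b ∈ univ.erase a, (X a - X b)) := by
    simp [map_prod]
  simp_rw [prod_mul_distrib, heval]
  refine sum_prod_mul_eval_comp_eq_zero w x _ fun d hd => ?_
  have hdeg : d.degree = c * (c - 1) := by
    by_contra h
    exact mem_support_iff.mp hd (isHomogeneous_prod_prod_erase_X_sub_X.coeff_eq_zero h)
  have hsum : ∑ a, d a < ∑ _a : σ, c := by
    rw [← Finsupp.degree_eq_sum, hdeg, sum_const, Finset.card_univ, smul_eq_mul]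
    exact Nat.mul_lt_mul_of_pos_left (Nat.sub_lt Fintype.card_pos one_pos) Fintype.card_pos
  obtain ⟨a, -, ha⟩ := exists_lt_of_sum_lt hsum
  exact ⟨a, hw _ ha⟩

theorem sum_one_div_prod_eq_zero {F : Type*} [Field F] [CharZero F]
    (n k : ℕ) (hk0 : 0 < k) (hk : k < n)
    (lam : Fin n → F) (hlam : Function.Injective lam) :
    ∑ I : {s : Finset (Fin n) // s.card = k},
        1 / ∏ i ∈ I.1, ∏ j ∈ I.1ᶜ, (lam i - lam j) = 0 := by
  have : Nonempty (Fin k) := ⟨⟨0, hk0⟩⟩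
  have hw : ∀ m < Fintype.card (Fin k),
      ∑ i, Lagrange.nodalWeight univ lam i * lam i ^ m = 0 := by
    intro m hm
    rw [Fintype.card_fin] at hm
    refine Lagrange.sum_nodalWeight_mul_pow_eq_zero hlam.injOn ?_
    rw [Finset.card_univ, Fintype.card_fin]
    omega
  have hsum := sum_fun_prod_mul_prod_erase_sub_eq_zero _ lam hw
  rw [sum_fun_prod_mul_prod_erase_sub, smul_eq_zero, or_iff_right (factorial_ne_zero k)] at hsum
  rw [← sum_subtype (powersetCard k univ) (fun _ => mem_powersetCard_univ)
    (fun I => 1 / ∏ i ∈ I, ∏ j ∈ Iᶜ, (lam i - lam j))]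
  simp_rw [one_div, compl_eq_univ_sdiff,
    Lagrange.inv_prod_prod_sdiff_sub hlam.injOn (subset_univ _)]
  exact hsum
end

section
/- Let λ₁,…,λₙ be distinct elements of a field of characteristic zero and 0 < k < n. Then ∑_{I⊂[n],|I|=k} (∏_{i∈I} λ_i)^{n−k} / ∏_{i∈I}∏_{j∈Iᶜ}(λ_i−λ_j) = 1. -/
/-!
With the weights `w i = ∏ j ≠ i, (λ i - λ j)⁻¹`, the `k × n` matrix `M a i = w i * λ i ^ a` and the
`n × k` matrix `N i b = λ i ^ (n - 1 - b)` have product `(M * N) a b = ∑ i, w i * λ i ^ (n - 1 + a - b)`.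
For `a ≤ b` this is the coefficient of `X ^ (n - 1)` in the Lagrange interpolant of
`X ^ (n - 1 - (b - a))`, so `M * N` is unitriangular and `det (M * N) = 1`.
By Cauchy–Binet, `det (M * N)` is the sum over `k`-subsets `I` of `det M_I * det N_I`, which is
`(∏ i ∈ I, w i) * (∏ i ∈ I, λ i) ^ (n - k)` times a Vandermonde determinant of `λ|_I` in increasing
powers and one in decreasing powers. Their product is `∏ i ≠ j ∈ I, (λ i - λ j)`, which cancels the
factors of the `w i` indexed inside `I` and leaves exactly the `I`-th summand.
-/

open Finset

namespace Finset

variable {ι : Type*} [LinearOrder ι] {k : ℕ}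

theorem exists_orderEmbOfFin_comp_perm_eq {f : Fin k → ι} (hf : Function.Injective f) :
    ∃ (I : {s : Finset ι // s.card = k}) (σ : Equiv.Perm (Fin k)),
      (fun a => I.1.orderEmbOfFin I.2 (σ a)) = f := by
  classical
  let I : {s : Finset ι // s.card = k} :=
    ⟨univ.image f, by rw [card_image_of_injective _ hf, card_univ, Fintype.card_fin]⟩
  have hmem : ∀ a, f a ∈ Set.range (I.1.orderEmbOfFin I.2) := fun a => by
    rw [range_orderEmbOfFin]; exact mem_coe.2 (mem_image_of_mem f (mem_univ a))
  choose g hg using hmem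
  have hg_inj : Function.Injective g := fun a b hab => hf (by rw [← hg a, ← hg b, hab])
  exact ⟨I, Equiv.ofBijective g hg_inj.bijective_of_finite, funext hg⟩

theorem orderEmbOfFin_comp_perm_injective :
    Function.Injective fun p : {s : Finset ι // s.card = k} × Equiv.Perm (Fin k) =>
      fun a => p.1.1.orderEmbOfFin p.1.2 (p.2 a) := by
  rintro ⟨I, σ⟩ ⟨J, τ⟩ h
  have hIJ : I = J := by
    have h' : Set.range (I.1.orderEmbOfFin I.2 ∘ σ) = Set.range (J.1.orderEmbOfFin J.2 ∘ τ) :=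
      congrArg Set.range h
    rw [EquivLike.range_comp, EquivLike.range_comp, range_orderEmbOfFin,
      range_orderEmbOfFin] at h'
    exact Subtype.ext (coe_injective h')
  subst hIJ
  exact Prod.ext rfl (Equiv.ext fun a => (I.1.orderEmbOfFin I.2).injective (congrFun h a))

theorem prod_prod_compl_singleton_eq_prod_prod_Ioi {M : Type*} [CommMonoid M] [Fintype ι]
    [LocallyFiniteOrderTop ι] [LocallyFiniteOrderBot ι] (f : ι → ι → M) :
    ∏ i, ∏ j ∈ {i}ᶜ, f i j = ∏ i, ∏ j ∈ Ioi i, (f i j * f j i) := by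
  have hswap : ∏ i, ∏ j ∈ Iio i, f i j = ∏ i, ∏ j ∈ Ioi i, f j i :=
    prod_comm' fun i j => by simp
  simp only [prod_mul_distrib]
  rw [← hswap, ← prod_mul_distrib]
  exact prod_congr rfl fun i _ => by rw [← Ioi_disjUnion_Iio, prod_disjUnion]

end Finset

namespace Matrix

variable {R ι : Type*} [CommRing R] {k : ℕ}

theorem det_mul_eq_sum_prod_mul_det_submatrix [Fintype ι] (M : Matrix (Fin k) ι R)
    (N : Matrix ι (Fin k) R) :
    (M * N).det = ∑ f : Fin k → ι, (∏ a, N (f a) a) * (M.submatrix id f).det := by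
  classical
  simp only [det_apply, mul_apply, prod_univ_sum, Fintype.piFinset_univ, smul_sum, mul_sum]
  rw [sum_comm]
  refine sum_congr rfl fun f _ => sum_congr rfl fun σ _ => ?_
  simp only [submatrix_apply, id_eq, prod_mul_distrib, mul_smul_comm, mul_comm]

theorem det_mul_eq_sum_det_submatrix_mul_det_submatrix [Fintype ι] [LinearOrder ι]
    (M : Matrix (Fin k) ι R) (N : Matrix ι (Fin k) R) :
    (M * N).det = ∑ I : {s : Finset ι // s.card = k},
      (M.submatrix id (I.1.orderEmbOfFin I.2)).det *
        (N.submatrix (I.1.orderEmbOfFin I.2) id).det := by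
  rw [det_mul_eq_sum_prod_mul_det_submatrix]
  symm
  calc _ = ∑ p : {s : Finset ι // s.card = k} × Equiv.Perm (Fin k),
        (∏ a, N (p.1.1.orderEmbOfFin p.1.2 (p.2 a)) a) *
          (M.submatrix id fun a => p.1.1.orderEmbOfFin p.1.2 (p.2 a)).det := by
        rw [Fintype.sum_prod_type]
        refine sum_congr rfl fun I _ => ?_
        rw [det_apply' (N.submatrix _ id), mul_sum]
        refine sum_congr rfl fun σ _ => ?_
        rw [show (M.submatrix id fun a => I.1.orderEmbOfFin I.2 (σ a)) =
          (M.submatrix id (I.1.orderEmbOfFin I.2)).submatrix id σ from rfl, det_permute']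
        simp only [submatrix_apply, id_eq]
        ring
    _ = _ := by
        refine sum_of_injOn _ orderEmbOfFin_comp_perm_injective.injOn (fun _ _ => mem_univ _)
          (fun f _ hf => ?_) (fun _ _ => rfl)
        contrapose! hf
        have hinj : Function.Injective f := by
          by_contra h
          obtain ⟨a, b, hab, hne⟩ := Function.not_injective_iff.1 h
          exact hf (by rw [det_zero_of_column_eq hne fun r => by simp [hab], mul_zero])
        obtain ⟨I, σ, rfl⟩ := exists_orderEmbOfFin_comp_perm_eq hinj
        exact ⟨(I, σ), mem_coe.2 (mem_univ _), rfl⟩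

theorem det_vandermonde_mul_det_projVandermonde_one (μ : Fin k → R) :
    (vandermonde μ).det * (projVandermonde 1 μ).det = ∏ a, ∏ b ∈ {a}ᶜ, (μ a - μ b) := by
  rw [prod_prod_compl_singleton_eq_prod_prod_Ioi, det_vandermonde, det_projVandermonde,
    ← prod_mul_distrib]
  refine prod_congr rfl fun a _ => ?_
  rw [← prod_mul_distrib]
  refine prod_congr rfl fun b _ => ?_
  simp only [Pi.one_apply, one_mul]
  ring

end Matrix

namespace Lagrange

open Polynomial

variable {F ι : Type*} [Field F] [DecidableEq ι] {s t : Finset ι} {v : ι → F}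

theorem sum_nodalWeight_mul_pow (hvs : Set.InjOn v s) {p : ℕ} (hp : p < #s) :
    ∑ i ∈ s, nodalWeight s v i * v i ^ p = if p = #s - 1 then 1 else 0 := by
  have h := coeff_eq_sum hvs (P := X ^ p) (by rw [degree_X_pow]; exact_mod_cast hp)
  rw [coeff_X_pow, eq_comm] at h
  simp only [eval_pow, eval_X, div_eq_mul_inv, ← prod_inv_distrib] at h
  simp only [nodalWeight, mul_comm _ (v _ ^ p), h, eq_comm (a := p)]

theorem nodalWeight_eq_mul_prod_sdiff (hts : t ⊆ s) {i : ι} (hi : i ∈ t) :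
    nodalWeight s v i = nodalWeight t v i * ∏ j ∈ s \ t, (v i - v j)⁻¹ := by
  have hst : s.erase i \ t.erase i = s \ t := by
    ext j; by_cases hj : j = i <;> simp [hj, hi]
  rw [nodalWeight, nodalWeight, mul_comm, ← hst, prod_sdiff (erase_subset_erase i hts)]

theorem nodalWeight_map {κ : Type*} [DecidableEq κ] (e : κ ↪ ι) (s : Finset κ) (v : ι → F)
    (a : κ) : nodalWeight (s.map e) v (e a) = nodalWeight s (v ∘ e) a := by
  rw [nodalWeight, nodalWeight, ← map_erase, prod_map]
  rfl

end Lagrange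

section PowerMatrices

open Lagrange Matrix

variable {F : Type*} [Field F] {n : ℕ} (lam : Fin n → F) (k : ℕ)

noncomputable def nodalWeightPowerMatrix : Matrix (Fin k) (Fin n) F :=
  .of fun a i => nodalWeight univ lam i * lam i ^ (a : ℕ)

def shiftedPowerMatrix : Matrix (Fin n) (Fin k) F :=
  .of fun i b => lam i ^ (n - k + b.rev)

variable {lam k}

theorem nodalWeightPowerMatrix_mul_shiftedPowerMatrix_apply_of_le
    (hlam : Function.Injective lam) (hk : k ≤ n) {a b : Fin k} (hab : a ≤ b) :
    (nodalWeightPowerMatrix lam k * shiftedPowerMatrix lam k) a b = if a = b then 1 else 0 := by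
  rw [Fin.le_iff_val_le_val] at hab
  have hexp : (a : ℕ) + (n - k + b.rev) = n - 1 - (b - a) := by
    rw [Fin.val_rev]; omega
  simp only [mul_apply, nodalWeightPowerMatrix, shiftedPowerMatrix, of_apply, mul_assoc,
    ← pow_add, hexp]
  rw [sum_nodalWeight_mul_pow hlam.injOn (by rw [card_univ, Fintype.card_fin]; omega)]
  simp only [card_univ, Fintype.card_fin, Fin.ext_iff]
  exact if_congr (by omega) rfl rfl

theorem det_nodalWeightPowerMatrix_mul_shiftedPowerMatrix
    (hlam : Function.Injective lam) (hk : k ≤ n) :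
    (nodalWeightPowerMatrix lam k * shiftedPowerMatrix lam k).det = 1 := by
  rw [det_of_isLowerTriangular]
  · simp [nodalWeightPowerMatrix_mul_shiftedPowerMatrix_apply_of_le hlam hk le_rfl]
  · intro a b hab
    have hab' : a < b := OrderDual.toDual_lt_toDual.1 hab
    exact (nodalWeightPowerMatrix_mul_shiftedPowerMatrix_apply_of_le hlam hk hab'.le).trans
      (if_neg hab'.ne)

theorem det_submatrix_nodalWeightPowerMatrix_mul_det_submatrix_shiftedPowerMatrix
    (hlam : Function.Injective lam) (I : {s : Finset (Fin n) // s.card = k}) :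
    ((nodalWeightPowerMatrix lam k).submatrix id (I.1.orderEmbOfFin I.2)).det *
        ((shiftedPowerMatrix lam k).submatrix (I.1.orderEmbOfFin I.2) id).det =
      (∏ i ∈ I.1, lam i) ^ (n - k) / ∏ i ∈ I.1, ∏ j ∈ I.1ᶜ, (lam i - lam j) := by
  set e := I.1.orderEmbOfFin I.2
  set μ := lam ∘ e
  have hprod (g : Fin n → F) : ∏ a, g (e a) = ∏ i ∈ I.1, g i := by
    rw [← map_orderEmbOfFin_univ I.1 I.2, prod_map]; rfl
  have hμ : ∏ a, μ a = ∏ i ∈ I.1, lam i := hprod lam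
  have hM : (nodalWeightPowerMatrix lam k).submatrix id e =
      (vandermonde μ)ᵀ * diagonal fun a => nodalWeight univ lam (e a) := by
    ext a b; simp [nodalWeightPowerMatrix, vandermonde_apply, μ, mul_comm]
  have hN : (shiftedPowerMatrix lam k).submatrix e id =
      diagonal (fun a => μ a ^ (n - k)) * projVandermonde 1 μ := by
    ext a b; simp [shiftedPowerMatrix, projVandermonde, rectVandermonde, μ, pow_add]
  have hweight : ∏ i ∈ I.1, nodalWeight I.1 lam i =
      ((vandermonde μ).det * (projVandermonde 1 μ).det)⁻¹ := by
    calc ∏ i ∈ I.1, nodalWeight I.1 lam i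
        = ∏ a, nodalWeight (univ.map e.toEmbedding) lam (e a) := by
          rw [map_orderEmbOfFin_univ, hprod]
      _ = ∏ a, nodalWeight univ μ a := prod_congr rfl fun a _ => nodalWeight_map _ _ _ a
      _ = _ := by
        simp only [nodalWeight, compl_singleton, prod_inv_distrib,
          det_vandermonde_mul_det_projVandermonde_one]
  have hne : (vandermonde μ).det * (projVandermonde 1 μ).det ≠ 0 := by
    rw [det_vandermonde_mul_det_projVandermonde_one]
    exact prod_ne_zero_iff.2 fun a _ => prod_ne_zero_iff.2 fun b hb => sub_ne_zero.2 fun h =>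
      mem_compl.1 hb (mem_singleton.2 (hlam.comp e.injective h).symm)
  rw [hM, hN, det_mul, det_mul, det_transpose, det_diagonal, det_diagonal, hprod, prod_pow, hμ,
    prod_congr rfl fun i hi => nodalWeight_eq_mul_prod_sdiff (subset_univ I.1) hi,
    prod_mul_distrib, hweight, ← compl_eq_univ_sdiff]
  simp only [prod_inv_distrib]
  field_simp
  exact mul_div_mul_left _ _ hne

end PowerMatrices

theorem sum_prod_pow_div_prod_eq_one_general {F : Type*} [Field F]
    (n k : ℕ) (hk : k < n)
    (lam : Fin n → F) (hlam : Function.Injective lam) :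
    ∑ I : {s : Finset (Fin n) // s.card = k},
        (∏ i ∈ I.1, lam i) ^ (n - k) / ∏ i ∈ I.1, ∏ j ∈ I.1ᶜ, (lam i - lam j) = 1 := by
  rw [← det_nodalWeightPowerMatrix_mul_shiftedPowerMatrix hlam hk.le,
    Matrix.det_mul_eq_sum_det_submatrix_mul_det_submatrix]
  exact sum_congr rfl fun I _ =>
    (det_submatrix_nodalWeightPowerMatrix_mul_det_submatrix_shiftedPowerMatrix hlam I).symm

theorem sum_prod_pow_div_prod_eq_one {F : Type*} [Field F] [CharZero F]
    (n k : ℕ) (hk0 : 0 < k) (hk : k < n)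
    (lam : Fin n → F) (hlam : Function.Injective lam) :
    ∑ I : {s : Finset (Fin n) // s.card = k},
        (∏ i ∈ I.1, lam i) ^ (n - k) / ∏ i ∈ I.1, ∏ j ∈ I.1ᶜ, (lam i - lam j) = 1 :=
  sum_prod_pow_div_prod_eq_one_general n k hk lam hlam
end

section
/- Let λ₁,…,λₙ be distinct elements of a field of characteristic zero, 0 < k < n, and let e_r denote the r-th elementary symmetric polynomial in k variables. For 0 ≤ r·1 ≤ k(n−k), if the symmetric polynomial e_r(x₁,…,x_k)^m has total degree rm < k(n−k), then ∑_{I⊂[n],|I|=k} e_r(λ_I)^m / ∏_{i∈I}∏_{j∈Iᶜ}(λ_i−λ_j) = 0. -/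
/-!
Write `V_s(v) = ∏_{i<j in s} (v_j - v_i)` and `S(v)` for the sum. Clearing denominators,
`S(v) · V_univ(v)` is the value at `v` of the polynomial `N = ∑_I ±f(X_I) · V_I(X) · V_{Iᶜ}(X)`,
of total degree at most `deg f + C(k,2) + C(n-k,2) < C(n,2)`. Since `f` is symmetric, `S` is
invariant under permutations of `v`, while `V_univ` is alternating; hence so is `N`. In
characteristic zero every monomial of an alternating polynomial has pairwise distinct exponents,
so its degree is at least `0 + 1 + ⋯ + (n-1) = C(n,2)`. Therefore `N = 0`, and `S(v) = 0`
because `V_univ(v) ≠ 0` for injective `v`.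
-/

open Finset MvPolynomial

theorem Finset.sum_range_card_le_sum (t : Finset ℕ) : ∑ i ∈ range #t, i ≤ ∑ i ∈ t, i := by
  induction t using Finset.induction_on_max with
  | empty => simp
  | insert a s hlt ih =>
    have ha : a ∉ s := fun h => lt_irrefl a (hlt a h)
    have hs : #s ≤ a := by
      simpa using card_le_card (fun x hx => mem_range.2 (hlt x hx) : s ⊆ range a)
    rw [card_insert_of_notMem ha, sum_range_succ, sum_insert ha]
    omega

theorem Fintype.sum_range_card_le_sum_of_injective {σ : Type*} [Fintype σ] {d : σ → ℕ}
    (hd : Function.Injective d) : ∑ i ∈ range (Fintype.card σ), i ≤ ∑ x, d x := by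
  classical
  simpa [card_image_of_injective _ hd, sum_image hd.injOn] using
    sum_range_card_le_sum (univ.image d)

section OrderedPairs

variable {ι M : Type*} [LinearOrder ι] [Fintype ι] [CommMonoid M]

@[to_additive]
theorem prod_prod_lt_split (s : Finset ι) (g : ι → ι → M) :
    ∏ i, ∏ j with i < j, g i j =
      (∏ i ∈ s, ∏ j ∈ s with i < j, g i j) * (∏ i ∈ sᶜ, ∏ j ∈ sᶜ with i < j, g i j) *
        ∏ i ∈ s, ∏ j ∈ sᶜ, if i < j then g i j else g j i := by
  set h : ι → ι → M := fun i j => if i < j then g i j else 1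
  have hcross : ∀ i ∈ s, ∀ j ∈ sᶜ, h i j * h j i = if i < j then g i j else g j i := by
    intro i hi j hj
    have hij : i ≠ j := by rintro rfl; exact mem_compl.1 hj hi
    rcases hij.lt_or_gt with hlt | hlt <;> simp [h, hlt, hlt.not_gt]
  simp only [prod_filter]
  rw [← prod_mul_prod_compl s, ← prod_congr rfl fun i _ => prod_mul_prod_compl s (h i),
    ← prod_congr rfl fun i _ => prod_mul_prod_compl s (h i), prod_mul_distrib, prod_mul_distrib,
    prod_comm (s := sᶜ) (t := s)]
  calc _ = (∏ i ∈ s, ∏ j ∈ s, h i j) * (∏ i ∈ sᶜ, ∏ j ∈ sᶜ, h i j) *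
        ∏ i ∈ s, ∏ j ∈ sᶜ, (h i j * h j i) := by simp only [prod_mul_distrib]; ac_rfl
    _ = _ := by
      congr 1
      exact prod_congr rfl fun i hi => prod_congr rfl fun j hj => hcross i hi j hj

end OrderedPairs

section Vandermonde

variable {ι R S : Type*} [LinearOrder ι] [CommRing R] [CommRing S]

def vandermondeOn (s : Finset ι) (v : ι → R) : R :=
  ∏ i ∈ s, ∏ j ∈ s with i < j, (v j - v i)

theorem map_vandermondeOn (φ : R →+* S) (s : Finset ι) (v : ι → R) :
    φ (vandermondeOn s v) = vandermondeOn s (fun i => φ (v i)) := by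
  simp [vandermondeOn, map_prod]

theorem totalDegree_vandermondeOn_le (s : Finset ι) :
    (vandermondeOn s (X : ι → MvPolynomial ι R)).totalDegree ≤ ∑ i ∈ s, #{j ∈ s | i < j} := by
  refine (totalDegree_finsetProd _ _).trans (sum_le_sum fun i _ => ?_)
  refine (totalDegree_finsetProd _ _).trans ?_
  rw [card_eq_sum_ones]
  exact sum_le_sum fun j _ => (totalDegree_sub _ _).trans
    (max_le (isHomogeneous_X R j).totalDegree_le (isHomogeneous_X R i).totalDegree_le)

variable [Fintype ι]

def crossSign (s : Finset ι) : R :=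
  ∏ i ∈ s, ∏ j ∈ sᶜ, if i < j then -1 else 1

theorem vandermondeOn_univ_eq (s : Finset ι) (v : ι → R) :
    vandermondeOn univ v =
      crossSign s * (∏ i ∈ s, ∏ j ∈ sᶜ, (v i - v j)) * vandermondeOn s v * vandermondeOn sᶜ v := by
  have hcross : (∏ i ∈ s, ∏ j ∈ sᶜ, if i < j then v j - v i else v i - v j) =
      crossSign s * ∏ i ∈ s, ∏ j ∈ sᶜ, (v i - v j) := by
    simp_rw [crossSign, ← prod_mul_distrib]
    refine prod_congr rfl fun i _ => prod_congr rfl fun j _ => ?_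
    split_ifs <;> ring
  rw [vandermondeOn, prod_prod_lt_split s, hcross, vandermondeOn, vandermondeOn]
  ring

end Vandermonde

section FinVandermonde

variable {R : Type*} [CommRing R] {n : ℕ}

theorem vandermondeOn_univ_eq_det (v : Fin n → R) :
    vandermondeOn univ v = (Matrix.vandermonde v).det := by
  simp [vandermondeOn, Matrix.det_vandermonde, filter_lt_eq_Ioi]

theorem vandermondeOn_univ_comp_perm (v : Fin n → R) (τ : Equiv.Perm (Fin n)) :
    vandermondeOn univ (v ∘ τ) = Equiv.Perm.sign τ * vandermondeOn univ v := by
  rw [vandermondeOn_univ_eq_det, vandermondeOn_univ_eq_det, ← Matrix.det_permute]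
  rfl

theorem vandermondeOn_univ_ne_zero_iff [IsDomain R] {v : Fin n → R} :
    vandermondeOn univ v ≠ 0 ↔ Function.Injective v := by
  rw [vandermondeOn_univ_eq_det, Matrix.det_vandermonde_ne_zero_iff]

end FinVandermonde

theorem sum_card_lt_eq_sum_range (n : ℕ) : ∑ i : Fin n, #{j | i < j} = ∑ i ∈ range n, i := by
  simp only [filter_lt_eq_Ioi, Fin.card_Ioi]
  rw [Fin.sum_univ_eq_sum_range (fun i => n - 1 - i)]
  exact sum_range_reflect id n

theorem sum_card_lt_add_sum_card_lt_compl {n : ℕ} (s : Finset (Fin n)) :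
    ∑ i ∈ s, #{j ∈ s | i < j} + ∑ i ∈ sᶜ, #{j ∈ sᶜ | i < j} + #s * #sᶜ = ∑ i ∈ range n, i := by
  have := sum_sum_lt_split s (fun _ _ => 1)
  simp only [ite_self, sum_const, smul_eq_mul, mul_one] at this
  rw [← this, sum_card_lt_eq_sum_range]

section Alternating

variable {σ R : Type*} [DecidableEq σ] [CommRing R] [NoZeroDivisors R] [CharZero R]

theorem MvPolynomial.coeff_eq_zero_of_rename_swap_eq_neg {p : MvPolynomial σ R} {i j : σ}
    (hp : rename (Equiv.swap i j) p = -p) {d : σ →₀ ℕ} (hd : d i = d j) : coeff d p = 0 := by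
  have hswap : Finsupp.mapDomain (Equiv.swap i j) d = d := by
    ext x
    rw [Finsupp.mapDomain_equiv_apply, Equiv.symm_swap, Equiv.swap_apply_def]
    split_ifs <;> simp_all
  have h := coeff_rename_mapDomain _ (Equiv.swap i j).injective p d
  rw [hswap, hp, coeff_neg, neg_eq_iff_add_eq_zero, add_self_eq_zero] at h
  exact h

theorem MvPolynomial.eq_zero_of_rename_swap_eq_neg [Fintype σ] {p : MvPolynomial σ R}
    (hp : ∀ i j, i ≠ j → rename (Equiv.swap i j) p = -p)
    (hdeg : p.totalDegree < ∑ i ∈ range (Fintype.card σ), i) : p = 0 := by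
  ext d
  rw [coeff_zero]
  by_contra hd
  by_cases hinj : Function.Injective d
  · have hle := le_totalDegree (mem_support_iff.2 hd)
    rw [Finsupp.sum_fintype _ _ fun _ => rfl] at hle
    have hge := Fintype.sum_range_card_le_sum_of_injective hinj
    omega
  · obtain ⟨i, j, hij, hne⟩ : ∃ i j, d i = d j ∧ i ≠ j := by
      simpa [Function.Injective] using hinj
    exact hd (coeff_eq_zero_of_rename_swap_eq_neg (hp i j hne) hij)

end Alternating

theorem MvPolynomial.IsSymmetric.eval_comp_eq_of_range_eq {σ ι R : Type*} [CommSemiring R]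
    {f : MvPolynomial σ R} (hf : f.IsSymmetric) {φ ψ : σ → ι} (hφ : Function.Injective φ)
    (hψ : Function.Injective ψ) (h : Set.range φ = Set.range ψ) (v : ι → R) :
    eval (fun a => v (φ a)) f = eval (fun a => v (ψ a)) f := by
  let π : Equiv.Perm σ :=
    (Equiv.ofInjective φ hφ).trans ((Equiv.setCongr h).trans (Equiv.ofInjective ψ hψ).symm)
  have hπ : ∀ a, ψ (π a) = φ a := fun a => by simp [π, Equiv.apply_ofInjective_symm]
  conv_rhs => rw [← hf π, eval_rename]
  simp only [Function.comp_def, hπ]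

section Localization

variable {F : Type*} [Field F] {n k : ℕ} {f : MvPolynomial (Fin k) F}

/-- The Atiyah–Bott localization sum of `f` over the torus-fixed points of `Gr(k, n)`. -/
noncomputable def localizationSum (f : MvPolynomial (Fin k) F) (v : Fin n → F) : F :=
  ∑ I : {s : Finset (Fin n) // s.card = k},
    eval (fun i => v ((I.1.orderIsoOfFin I.2) i : Fin n)) f / ∏ i ∈ I.1, ∏ j ∈ I.1ᶜ, (v i - v j)

noncomputable def localizationNumerator (n : ℕ) (f : MvPolynomial (Fin k) F) :
    MvPolynomial (Fin n) F :=
  ∑ I : {s : Finset (Fin n) // s.card = k},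
    C (crossSign I.1) * rename (I.1.orderEmbOfFin I.2) f * vandermondeOn I.1 X *
      vandermondeOn I.1ᶜ X

theorem localizationSum_comp_perm (hf : f.IsSymmetric) (v : Fin n → F) (τ : Equiv.Perm (Fin n)) :
    localizationSum f (v ∘ τ) = localizationSum f v := by
  refine Fintype.sum_equiv (Equiv.subtypeEquiv τ.finsetCongr fun s => by simp) _ _ fun I => ?_
  have hcompl : (I.1.map τ.toEmbedding)ᶜ = I.1ᶜ.map τ.toEmbedding := by ext; simp
  simp only [Equiv.subtypeEquiv_apply, Equiv.finsetCongr_apply, coe_orderIsoOfFin_apply, hcompl,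
    prod_map, Function.comp_apply]
  congr 1
  exact hf.eval_comp_eq_of_range_eq (τ.injective.comp (orderEmbOfFin _ _).injective)
    (orderEmbOfFin _ _).injective (by simp [Set.range_comp, range_orderEmbOfFin]) v

theorem eval_localizationNumerator (f : MvPolynomial (Fin k) F) {v : Fin n → F}
    (hv : Function.Injective v) :
    eval v (localizationNumerator n f) = localizationSum f v * vandermondeOn univ v := by
  rw [localizationNumerator, localizationSum, map_sum, sum_mul]
  refine sum_congr rfl fun I _ => ?_
  have hD : ∏ i ∈ I.1, ∏ j ∈ I.1ᶜ, (v i - v j) ≠ 0 :=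
    prod_ne_zero_iff.2 fun i hi => prod_ne_zero_iff.2 fun j hj =>
      sub_ne_zero.2 (hv.ne (by rintro rfl; exact mem_compl.1 hj hi))
  rw [vandermondeOn_univ_eq I.1 v]
  simp only [map_mul, eval_C, eval_rename, map_vandermondeOn, eval_X, coe_orderIsoOfFin_apply,
    Function.comp_def]
  field_simp

theorem totalDegree_localizationNumerator_lt (hf : f.totalDegree < k * (n - k)) :
    (localizationNumerator n f).totalDegree < ∑ i ∈ range n, i := by
  have hn : 1 < n := by
    have hpos := CanonicallyOrderedAdd.mul_pos.1 ((Nat.zero_le _).trans_lt hf)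
    omega
  refine (totalDegree_finsetSum _ _).trans_lt
    ((Finset.sup_lt_iff (single_le_sum (fun i _ => Nat.zero_le i) (mem_range.2 hn))).2
      fun I _ => ?_)
  have hcard : #I.1 * #I.1ᶜ = k * (n - k) := by simp [card_compl, I.2]
  calc _ ≤ f.totalDegree + ∑ i ∈ I.1, #{j ∈ I.1 | i < j} + ∑ i ∈ I.1ᶜ, #{j ∈ I.1ᶜ | i < j} := by
        refine (totalDegree_mul _ _).trans (add_le_add ((totalDegree_mul _ _).trans
          (add_le_add ((totalDegree_mul _ _).trans ?_) (totalDegree_vandermondeOn_le _)))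
          (totalDegree_vandermondeOn_le _))
        rw [totalDegree_C, zero_add]
        exact totalDegree_rename_le _ _
    _ < ∑ i ∈ range n, i := by
        rw [← sum_card_lt_add_sum_card_lt_compl I.1, hcard]
        omega

variable [CharZero F]

theorem rename_swap_localizationNumerator (hf : f.IsSymmetric) {i j : Fin n} (hij : i ≠ j) :
    rename (Equiv.swap i j) (localizationNumerator n f) = -localizationNumerator n f := by
  have hV : (vandermondeOn univ X : MvPolynomial (Fin n) F) ≠ 0 := fun h => by
    have hinj : Function.Injective fun i : Fin n => (i : F) :=
      Nat.cast_injective.comp Fin.val_injective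
    apply vandermondeOn_univ_ne_zero_iff.2 hinj
    simpa [map_vandermondeOn] using congrArg (eval fun i : Fin n => (i : F)) h
  refine eq_neg_of_add_eq_zero_left (mul_right_cancel₀ hV (MvPolynomial.funext fun v => ?_))
  simp only [map_mul, map_add, eval_rename, map_vandermondeOn, eval_X, zero_mul, map_zero]
  by_cases hv : Function.Injective v
  · rw [eval_localizationNumerator f hv, eval_localizationNumerator f (hv.comp (Equiv.injective _)),
      localizationSum_comp_perm hf, vandermondeOn_univ_comp_perm, Equiv.Perm.sign_swap hij]
    push_cast
    ring
  · rw [not_ne_iff.1 (mt vandermondeOn_univ_ne_zero_iff.1 hv), mul_zero]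

theorem localizationSum_eq_zero (hf : f.IsSymmetric) (hdeg : f.totalDegree < k * (n - k))
    {v : Fin n → F} (hv : Function.Injective v) : localizationSum f v = 0 := by
  have hN : localizationNumerator n f = 0 :=
    eq_zero_of_rename_swap_eq_neg (fun _ _ => rename_swap_localizationNumerator hf)
      (by simpa using totalDegree_localizationNumerator_lt hdeg)
  have h := eval_localizationNumerator f hv
  rw [hN, map_zero, eq_comm, mul_eq_zero] at h
  exact h.resolve_right (vandermondeOn_univ_ne_zero_iff.2 hv)

end Localization

theorem MvPolynomial.totalDegree_esymm_le (σ R : Type*) [Fintype σ] [CommSemiring R] (r : ℕ) :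
    (esymm σ R r).totalDegree ≤ r := by
  refine (totalDegree_finsetSum _ _).trans (Finset.sup_le fun t ht => ?_)
  refine (totalDegree_finsetProd _ _).trans ?_
  rw [← (mem_powersetCard.1 ht).2, card_eq_sum_ones]
  exact sum_le_sum fun i _ => (isHomogeneous_X R i).totalDegree_le

theorem sum_esymm_pow_div_prod_eq_zero_general {F : Type*} [Field F] [CharZero F]
    (n k : ℕ)
    (lam : Fin n → F) (hlam : Function.Injective lam)
    (r m : ℕ) (hrm : r * m < k * (n - k)) :
    ∑ I : {s : Finset (Fin n) // s.card = k},
        (MvPolynomial.eval (fun i => lam ((I.1.orderIsoOfFin I.2) i : Fin n))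
            ((MvPolynomial.esymm (Fin k) F r) ^ m)) /
          ∏ i ∈ I.1, ∏ j ∈ I.1ᶜ, (lam i - lam j) = 0 := by
  have hsymm : ((esymm (Fin k) F r) ^ m).IsSymmetric := fun π => by
    rw [map_pow, esymm_isSymmetric]
  have hdeg : ((esymm (Fin k) F r) ^ m).totalDegree < k * (n - k) := by
    refine lt_of_le_of_lt ((totalDegree_pow _ _).trans ?_) hrm
    rw [mul_comm r]
    exact Nat.mul_le_mul_left m (totalDegree_esymm_le _ _ r)
  exact localizationSum_eq_zero hsymm hdeg hlam

theorem sum_esymm_pow_div_prod_eq_zero {F : Type*} [Field F] [CharZero F]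
    (n k : ℕ) (hk0 : 0 < k) (hk : k < n)
    (lam : Fin n → F) (hlam : Function.Injective lam)
    (r m : ℕ) (hrm : r * m < k * (n - k)) :
    ∑ I : {s : Finset (Fin n) // s.card = k},
        (MvPolynomial.eval (fun i => lam ((I.1.orderIsoOfFin I.2) i : Fin n))
            ((MvPolynomial.esymm (Fin k) F r) ^ m)) /
          ∏ i ∈ I.1, ∏ j ∈ I.1ᶜ, (lam i - lam j) = 0 :=
  sum_esymm_pow_div_prod_eq_zero_general n k lam hlam r m hrm
end

section
/- Let λ₁,…,λₙ be distinct elements of a field of characteristic zero, 0 < k < n, and let P(x₁,…,x_k) and Q(y₁,…,y_{n−k}) be symmetric polynomials with deg P + deg Q ≤ k(n−k). Then ∑_{I⊂[n],|I|=k} P(λ_I)Q(λ_{Iᶜ}) / ∏_{i∈I}∏_{j∈Iᶜ}(λ_i−λ_j) = d(k,n)/(k!(n−k)!), where d(k,n) is the coefficient of x₁^{n−1}⋯x_k^{n−1}y₁^{n−1}⋯y_{n−k}^{n−1} in P(x)Q(y)·∏_{i=1}^k∏_{j≠i}(x_i−x_j)·∏_{i=1}^{n−k}∏_{j≠i}(y_i−y_j)·∏_{i=1}^{n−k}∏_{j=1}^k(y_i−x_j).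 -/
/-!
Write `Δ(z) = ∏_{i<j} (z_j - z_i)` and let `R(x, y) = P(x) Δ(x) Q(y) Δ(y)`, a polynomial in the
`n` variables `z = (x, y)`. Its alternation `∑_σ sign σ · R(z ∘ σ)` is alternating of degree at most
`n(n-1)/2`, so it equals `c · Δ(z)` with `c` its coefficient of `z^(0, 1, …, n-1)`. Evaluating at
`λ`, the term of `σ` divided by `Δ(λ)` is `±P(λ_I) Q(λ_{Iᶜ}) / ∏_{i ∈ I, j ∉ I} (λ_i - λ_j)` for
`I = σ {1, …, k}`, and each `k`-subset `I` comes from `k! (n-k)!` permutations. On the other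
side, the polynomial of the statement is `±R(z) · ∏_{i<j} (z_i - z_j)`, and the coefficient of
`z^(n-1, …, n-1)` in such a product is exactly `c`.
-/

open Finset MvPolynomial Equiv Matrix

lemma Finset.eq_range_card_of_sum_le {s : Finset ℕ} (h : ∑ x ∈ s, x ≤ ∑ x ∈ range #s, x) :
    s = range #s := by
  by_contra hne
  set t := range #s
  have hcard : #(t \ s) = #(s \ t) := card_sdiff_comm (card_range _)
  have hst : (s \ t).Nonempty := by
    rw [nonempty_iff_ne_empty, Ne, sdiff_eq_empty_iff_subset]
    exact fun hsub => hne (eq_of_subset_of_card_le hsub (card_range _).le)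
  have hts : (t \ s).Nonempty := by
    rw [← card_pos, hcard]
    exact hst.card_pos
  -- elements of `t \ s` lie below `#s`, those of `s \ t` above it
  have hlt : ∑ x ∈ t \ s, x < ∑ x ∈ s \ t, x := calc
    ∑ x ∈ t \ s, x < ∑ _x ∈ t \ s, #s :=
      sum_lt_sum_of_nonempty hts fun x hx => mem_range.1 (mem_sdiff.1 hx).1
    _ = ∑ _x ∈ s \ t, #s := by simp only [sum_const, hcard]
    _ ≤ ∑ x ∈ s \ t, x :=
      sum_le_sum fun x hx => not_lt.1 fun h' => (mem_sdiff.1 hx).2 (mem_range.2 h')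
  have hs := sum_inter_add_sum_sdiff s t id
  have ht := sum_inter_add_sum_sdiff t s id
  rw [inter_comm] at ht
  simp only [id] at hs ht
  omega

lemma Finset.prod_orderIsoOfFin {α M : Type*} [LinearOrder α] [CommMonoid M] (s : Finset α)
    {r : ℕ} (hs : #s = r) (g : α → M) : ∏ a : Fin r, g (s.orderIsoOfFin hs a) = ∏ x ∈ s, g x :=
  (Equiv.prod_comp (s.orderIsoOfFin hs).toEquiv fun x : s => g x).trans (prod_coe_sort s g)

lemma Fin.prod_prod_Ioi_append {α M : Type*} [CommMonoid M] {k m : ℕ} (x : Fin k → α)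
    (y : Fin m → α) (g : α → α → M) :
    ∏ i, ∏ j ∈ Ioi i, g (Fin.append x y i) (Fin.append x y j) =
      (∏ a, ∏ a' ∈ Ioi a, g (x a) (x a')) * (∏ b, ∏ b' ∈ Ioi b, g (y b) (y b')) *
        ∏ a, ∏ b, g (x a) (y b) := by
  have hcast (a a' : Fin k) : castAdd m a < castAdd m a' ↔ a < a' := Iff.rfl
  have hlt (a : Fin k) (b : Fin m) : castAdd m a < natAdd k b := by
    rw [Fin.lt_def, val_castAdd, val_natAdd]
    omega
  have hnlt (a : Fin k) (b : Fin m) : ¬ natAdd k b < castAdd m a := (hlt a b).asymm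
  simp only [← filter_lt_eq_Ioi, prod_filter, Fin.prod_univ_add, Fin.append_left, Fin.append_right,
    hcast, natAdd_lt_natAdd_iff, hlt, hnlt, if_true, if_false, prod_const_one, mul_one,
    prod_mul_distrib]
  ac_rfl

lemma prod_prod_sub_swap {A : Type*} [CommRing A] {k m : ℕ} (x : Fin k → A) (y : Fin m → A) :
    ∏ a, ∏ b, (y b - x a) = (-1) ^ (k * m) * ∏ a, ∏ b, (x a - y b) := by
  simp_rw [← neg_sub (x _), prod_neg, prod_mul_distrib, card_univ, Fintype.card_fin, prod_const,
    card_univ, Fintype.card_fin, ← pow_mul, mul_comm m k]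

namespace Matrix

variable {A : Type*} [CommRing A] {n k m : ℕ}

lemma det_projVandermonde_one_mul_det_vandermonde (x : Fin n → A) :
    (projVandermonde 1 x).det * (vandermonde x).det = ∏ i, ∏ j ∈ univ.erase i, (x i - x j) := by
  simp_rw [det_projVandermonde, det_vandermonde, ← prod_mul_distrib, ← compl_singleton]
  rw [← prod_prod_Ioi_mul_eq_prod_prod_off_diag fun j i => x i - x j]
  simp [mul_comm]

lemma det_vandermonde_append (x : Fin k → A) (y : Fin m → A) :
    (vandermonde (Fin.append x y)).det =
      (vandermonde x).det * (vandermonde y).det * ∏ a, ∏ b, (y b - x a) := by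
  simp only [det_vandermonde]
  exact Fin.prod_prod_Ioi_append x y fun u v => v - u

lemma det_projVandermonde_one_append (x : Fin k → A) (y : Fin m → A) :
    (projVandermonde 1 (Fin.append x y)).det =
      (projVandermonde 1 x).det * (projVandermonde 1 y).det * ∏ a, ∏ b, (x a - y b) := by
  simp only [det_projVandermonde, Pi.one_apply, one_mul]
  exact Fin.prod_prod_Ioi_append x y fun u v => u - v

end Matrix

namespace MvPolynomial

section Alternating

variable {R ι : Type*} [CommRing R] [Fintype ι] [DecidableEq ι]

def IsAlternating (φ : MvPolynomial ι R) : Prop :=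
  ∀ π : Perm ι, rename π φ = Perm.sign π • φ

noncomputable def alternation (φ : MvPolynomial ι R) : MvPolynomial ι R :=
  ∑ π : Perm ι, Perm.sign π • rename π φ

lemma isAlternating_alternation (φ : MvPolynomial ι R) : (alternation φ).IsAlternating := by
  intro π
  rw [alternation, map_sum, Finset.smul_sum,
    ← Equiv.sum_comp (Equiv.mulLeft π) fun σ => Perm.sign π • Perm.sign σ • rename σ φ]
  refine sum_congr rfl fun σ _ => ?_
  rw [Units.smul_def, map_zsmul, rename_rename, ← Units.smul_def, coe_mulLeft, Perm.coe_mul,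
    smul_smul, Perm.sign_mul, ← mul_assoc, Int.units_mul_self, one_mul]

lemma totalDegree_alternation_le (φ : MvPolynomial ι R) :
    (alternation φ).totalDegree ≤ φ.totalDegree :=
  (totalDegree_finsetSum _ _).trans <| Finset.sup_le fun _ _ =>
    (totalDegree_smul_le _ _).trans (totalDegree_rename_le _ _)

lemma eval_alternation (φ : MvPolynomial ι R) (x : ι → R) :
    eval x (alternation φ) = ∑ π : Perm ι, Perm.sign π • eval (x ∘ π) φ := by
  simp [alternation, eval_rename, Units.smul_def]

lemma IsAlternating.coeff_mapDomain {φ : MvPolynomial ι R} (hφ : φ.IsAlternating)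
    (π : Perm ι) (d : ι →₀ ℕ) :
    coeff (Finsupp.mapDomain π d) φ = Perm.sign π • coeff d φ := by
  have h := coeff_rename_mapDomain π π.injective φ d
  rw [hφ, coeff_smul] at h
  rw [← h, smul_smul, Int.units_mul_self, one_smul]

lemma IsAlternating.coeff_eq_zero_of_apply_eq [IsAddTorsionFree R] {φ : MvPolynomial ι R}
    (hφ : φ.IsAlternating) {d : ι →₀ ℕ} {i j : ι} (hij : i ≠ j) (hd : d i = d j) :
    coeff d φ = 0 := by
  have hswap : Finsupp.mapDomain (swap i j) d = d := by
    ext a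
    rw [Finsupp.mapDomain_equiv_apply, symm_swap, swap_apply_def]
    split_ifs <;> simp_all
  have h := hφ.coeff_mapDomain (swap i j) d
  rwa [hswap, Perm.sign_swap hij, Units.neg_smul, one_smul, self_eq_neg] at h

end Alternating

section Vandermonde

variable {R : Type*} [CommRing R] {n : ℕ}

noncomputable def permExponent (π : Perm (Fin n)) : Fin n →₀ ℕ :=
  Finsupp.equivFunOnFinite.symm fun i => π i

@[simp] lemma permExponent_apply (π : Perm (Fin n)) (i : Fin n) : permExponent π i = π i := rfl

lemma permExponent_injective : Function.Injective (permExponent (n := n)) := fun _ _ h =>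
  Equiv.ext fun i => Fin.ext (DFunLike.congr_fun h i)

lemma mapDomain_permExponent (σ π : Perm (Fin n)) :
    Finsupp.mapDomain σ (permExponent π) = permExponent (π * σ⁻¹) := by
  ext i
  rw [Finsupp.mapDomain_equiv_apply]
  rfl

lemma monomial_permExponent (π : Perm (Fin n)) :
    monomial (permExponent π) (1 : R) = ∏ i, X i ^ (π i : ℕ) := by
  rw [monomial_eq, C_1, one_mul, Finsupp.prod_fintype _ _ fun _ => pow_zero _]
  rfl

lemma det_of_X_pow (f : Perm (Fin n)) :
    (Matrix.of fun i j => (X i : MvPolynomial (Fin n) R) ^ (f j : ℕ)).det =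
      ∑ π : Perm (Fin n), Perm.sign π • monomial (permExponent (f * π)) 1 := by
  rw [det_apply, ← Equiv.sum_comp (Equiv.inv (Perm (Fin n)))]
  refine sum_congr rfl fun σ _ => ?_
  rw [inv_apply, Perm.sign_inv, monomial_permExponent, ← Equiv.prod_comp σ]
  simp

noncomputable def vandermondePoly (n : ℕ) : MvPolynomial (Fin n) R :=
  (vandermonde X).det

lemma vandermondePoly_eq_sum :
    vandermondePoly n = ∑ π : Perm (Fin n), Perm.sign π • monomial (permExponent π) (1 : R) := by
  simpa [vandermondePoly, vandermonde] using det_of_X_pow (R := R) (n := n) 1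

lemma eval_vandermondePoly (x : Fin n → R) : eval x (vandermondePoly n) = (vandermonde x).det := by
  rw [vandermondePoly, RingHom.map_det]
  congr 1
  ext i j
  simp

lemma rename_vandermondePoly {σ : Type*} (f : Fin n → σ) :
    rename f (vandermondePoly n : MvPolynomial (Fin n) R) = (vandermonde fun i => X (f i)).det := by
  rw [vandermondePoly, ← AlgHom.coe_toRingHom, RingHom.map_det]
  congr 1
  ext i j
  simp

lemma totalDegree_vandermondePoly_le :
    (vandermondePoly n : MvPolynomial (Fin n) R).totalDegree ≤ ∑ i : Fin n, (i : ℕ) := by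
  rw [vandermondePoly_eq_sum]
  refine (totalDegree_finsetSum _ _).trans <| Finset.sup_le fun π _ =>
    (totalDegree_smul_le _ _).trans <| (totalDegree_monomial_le _ _).trans_eq ?_
  rw [Finsupp.sum_fintype _ _ fun _ => rfl]
  exact Equiv.sum_comp π fun i : Fin n => (i : ℕ)

lemma coeff_vandermondePoly (d : Fin n →₀ ℕ) :
    coeff d (vandermondePoly n : MvPolynomial (Fin n) R) =
      ∑ π : Perm (Fin n), if permExponent π = d then (Perm.sign π : R) else 0 := by
  simp only [vandermondePoly_eq_sum, coeff_sum, coeff_smul, coeff_monomial]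
  refine sum_congr rfl fun π _ => ?_
  split_ifs <;> simp [Units.smul_def]

lemma exists_permExponent_eq {d : Fin n →₀ ℕ} (hd : Function.Injective d)
    (hsum : ∑ i, d i ≤ ∑ i : Fin n, (i : ℕ)) : ∃ π, permExponent π = d := by
  have hcard : #(image d univ) = n := by
    rw [card_image_of_injective _ hd, card_univ, Fintype.card_fin]
  have himage : image d univ = range n := by
    conv_rhs => rw [← hcard]
    apply eq_range_card_of_sum_le
    rwa [hcard, sum_image fun _ _ _ _ h => hd h, ← Fin.sum_univ_eq_sum_range]
  have hlt (i : Fin n) : d i < n := mem_range.1 (himage ▸ mem_image_of_mem d (mem_univ i))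
  have hinj : Function.Injective fun i => (⟨d i, hlt i⟩ : Fin n) :=
    fun i j h => hd (Fin.mk.inj h)
  exact ⟨Equiv.ofBijective _ hinj.bijective_of_finite, Finsupp.ext fun _ => rfl⟩

lemma IsAlternating.coeff_permExponent {φ : MvPolynomial (Fin n) R} (hφ : φ.IsAlternating)
    (π : Perm (Fin n)) : coeff (permExponent π) φ = Perm.sign π • coeff (permExponent 1) φ := by
  have h := hφ.coeff_mapDomain π⁻¹ (permExponent 1)
  rwa [mapDomain_permExponent, one_mul, inv_inv, Perm.sign_inv] at h

lemma IsAlternating.eq_smul_vandermondePoly [IsAddTorsionFree R] {φ : MvPolynomial (Fin n) R}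
    (hφ : φ.IsAlternating) (hdeg : φ.totalDegree ≤ ∑ i : Fin n, (i : ℕ)) :
    φ = coeff (permExponent 1) φ • vandermondePoly n := by
  ext d
  rw [coeff_smul, coeff_vandermondePoly, smul_eq_mul]
  by_cases hd : ∃ π, permExponent π = d
  · obtain ⟨π, rfl⟩ := hd
    rw [sum_eq_single π (fun σ _ hσ => if_neg (permExponent_injective.ne hσ)) (by simp),
      if_pos rfl, hφ.coeff_permExponent, Units.smul_def, zsmul_eq_mul, mul_comm]
  simp only [not_exists] at hd
  rw [sum_eq_zero fun π _ => if_neg (hd π), mul_zero]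
  by_cases hinj : Function.Injective d
  · apply coeff_eq_zero_of_totalDegree_lt
    rw [show ∑ i ∈ d.support, d i = ∑ i, d i from Finsupp.sum_fintype d (fun _ e => e) fun _ => rfl]
    by_contra hle
    obtain ⟨π, hπ⟩ := exists_permExponent_eq hinj (by omega)
    exact hd π hπ
  · obtain ⟨i, j, hij, hne⟩ := Function.not_injective_iff.1 hinj
    exact hφ.coeff_eq_zero_of_apply_eq hne hij

lemma coeff_one_alternation (φ : MvPolynomial (Fin n) R) :
    coeff (permExponent 1) (alternation φ) =
      ∑ π : Perm (Fin n), Perm.sign π • coeff (permExponent π) φ := by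
  rw [alternation, coeff_sum]
  refine sum_congr rfl fun π _ => ?_
  rw [coeff_smul, ← coeff_rename_mapDomain π π.injective φ, mapDomain_permExponent, mul_inv_cancel]

lemma det_projVandermonde_one_X :
    (projVandermonde 1 X : Matrix (Fin n) (Fin n) (MvPolynomial (Fin n) R)).det =
      ∑ π : Perm (Fin n), Perm.sign π • monomial (permExponent (Fin.revPerm * π)) 1 := by
  rw [← det_of_X_pow]
  congr 1
  ext i j
  simp [projVandermonde_apply]

/-- `(projVandermonde 1 X).det` is `∏ i < j, (X i - X j)`. -/
lemma coeff_mul_det_projVandermonde (φ : MvPolynomial (Fin n) R) :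
    coeff (Finsupp.equivFunOnFinite.symm fun _ => n - 1) (φ * (projVandermonde 1 X).det) =
      coeff (permExponent 1) (alternation φ) := by
  rw [det_projVandermonde_one_X, Finset.mul_sum, coeff_sum, coeff_one_alternation]
  refine sum_congr rfl fun π _ => ?_
  have hle : permExponent (Fin.revPerm * π) ≤ Finsupp.equivFunOnFinite.symm fun _ => n - 1 :=
    fun i => by
      simp only [permExponent_apply, Perm.coe_mul, Function.comp_apply, Fin.revPerm_apply,
        Fin.val_rev, Finsupp.equivFunOnFinite_symm_apply_apply]
      omega
  have hsub : (Finsupp.equivFunOnFinite.symm fun _ => n - 1) - permExponent (Fin.revPerm * π) =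
      permExponent π := by
    ext i
    simp only [Finsupp.coe_tsub, Finsupp.coe_equivFunOnFinite_symm, Pi.sub_apply,
      permExponent_apply, Perm.coe_mul, Function.comp_apply, Fin.revPerm_apply, Fin.val_rev]
    omega
  rw [mul_smul_comm, coeff_smul, coeff_mul_monomial', if_pos hle, hsub, mul_one]

end Vandermonde

end MvPolynomial
namespace SubsetSum

variable {n k m : ℕ}

lemma card_compl_eq (hkm : k + m = n) {s : Finset (Fin n)} (hs : #s = k) : #sᶜ = m := by
  rw [card_compl, hs, Fintype.card_fin]
  omega

/-- `λ ∘ blockEquiv hkm I` is the pair of tuples `(λ_I, λ_{Iᶜ})`, each in increasing order. -/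
noncomputable def blockEquiv (hkm : k + m = n) (I : {s : Finset (Fin n) // #s = k}) :
    Fin k ⊕ Fin m ≃ Fin n :=
  (sumCongr (I.1.orderIsoOfFin I.2).toEquiv
    ((I.1ᶜ.orderIsoOfFin (card_compl_eq hkm I.2)).toEquiv.trans
      (subtypeEquivRight fun _ => mem_compl))).trans (sumCompl (· ∈ I.1))

@[simp] lemma blockEquiv_inl (hkm : k + m = n) (I : {s : Finset (Fin n) // #s = k}) (a : Fin k) :
    blockEquiv hkm I (.inl a) = I.1.orderIsoOfFin I.2 a := rfl

@[simp] lemma blockEquiv_inr (hkm : k + m = n) (I : {s : Finset (Fin n) // #s = k}) (b : Fin m) :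
    blockEquiv hkm I (.inr b) = I.1ᶜ.orderIsoOfFin (card_compl_eq hkm I.2) b := rfl

lemma mem_iff_isLeft_blockEquiv_symm (hkm : k + m = n) (I : {s : Finset (Fin n) // #s = k})
    (τ : Perm (Fin k)) (ρ : Perm (Fin m)) (x : Fin n) :
    x ∈ I.1 ↔ (((sumCongr τ ρ).trans (blockEquiv hkm I)).symm x).isLeft := by
  by_cases hx : x ∈ I.1 <;>
    simp [blockEquiv, hx, sumCompl_symm_apply_of_pos, sumCompl_symm_apply_of_neg]

lemma blockEquiv_comp_sumCongr_bijective (hkm : k + m = n) :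
    Function.Bijective fun t : {s : Finset (Fin n) // #s = k} × Perm (Fin k) × Perm (Fin m) =>
      (sumCongr t.2.1 t.2.2).trans (blockEquiv hkm t.1) := by
  rw [Fintype.bijective_iff_injective_and_card]
  refine ⟨fun ⟨I, τ, ρ⟩ ⟨I', τ', ρ'⟩ h => ?_, ?_⟩
  · dsimp only at h
    obtain rfl : I = I' := Subtype.ext <| Finset.ext fun x => by
      rw [mem_iff_isLeft_blockEquiv_symm hkm I τ ρ, mem_iff_isLeft_blockEquiv_symm hkm I' τ' ρ', h]
    have h' : sumCongr τ ρ = sumCongr τ' ρ' := by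
      simpa only [trans_assoc, self_trans_symm, trans_refl] using
        congrArg (·.trans (blockEquiv hkm I).symm) h
    simp only [Prod.mk.injEq, true_and]
    exact ⟨Equiv.ext fun a => Sum.inl_injective (congrFun (congrArg DFunLike.coe h') (.inl a)),
      Equiv.ext fun b => Sum.inr_injective (congrFun (congrArg DFunLike.coe h') (.inr b))⟩
  · rw [Fintype.card_equiv (finSumFinEquiv.trans (finCongr hkm))]
    simp only [Fintype.card_prod, Fintype.card_finset_len, Fintype.card_perm, Fintype.card_fin,
      Fintype.card_sum]
    rw [← hkm, ← Nat.choose_mul_factorial_mul_factorial (Nat.le_add_right k m),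
      Nat.add_sub_cancel_left, mul_assoc]

lemma sum_equiv_eq_factorial_mul_sum {M : Type*} [AddCommMonoid M] (hkm : k + m = n)
    (f : (Fin k ⊕ Fin m ≃ Fin n) → M)
    (hf : ∀ u (τ : Perm (Fin k)) (ρ : Perm (Fin m)), f ((sumCongr τ ρ).trans u) = f u) :
    ∑ u, f u = (k.factorial * m.factorial) • ∑ I : {s : Finset (Fin n) // #s = k},
      f (blockEquiv hkm I) := by
  rw [← (blockEquiv_comp_sumCongr_bijective hkm).sum_comp, Fintype.sum_prod_type, smul_sum]
  refine sum_congr rfl fun I _ => ?_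
  simp [hf, mul_smul, Fintype.card_perm]

section CommRing

variable {R : Type*} [CommRing R]

noncomputable def blockProduct (P : MvPolynomial (Fin k) R) (Q : MvPolynomial (Fin m) R) :
    MvPolynomial (Fin k ⊕ Fin m) R :=
  rename Sum.inl (P * vandermondePoly k) * rename Sum.inr (Q * vandermondePoly m)

lemma totalDegree_blockProduct_le (hkm : k + m = n) {P : MvPolynomial (Fin k) R}
    {Q : MvPolynomial (Fin m) R} (hdeg : P.totalDegree + Q.totalDegree ≤ k * m) :
    (blockProduct P Q).totalDegree ≤ ∑ i : Fin n, (i : ℕ) := by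
  have hsum : ∑ i : Fin n, (i : ℕ) = ∑ a : Fin k, (a : ℕ) + ∑ b : Fin m, (b : ℕ) + k * m := by
    subst hkm
    simp only [Fin.sum_univ_add, Fin.val_castAdd, Fin.val_natAdd, sum_add_distrib, sum_const,
      card_univ, Fintype.card_fin, smul_eq_mul]
    ring
  have hP : (P * vandermondePoly k).totalDegree ≤ P.totalDegree + ∑ a : Fin k, (a : ℕ) :=
    (totalDegree_mul _ _).trans (by gcongr; exact totalDegree_vandermondePoly_le)
  have hQ : (Q * vandermondePoly m).totalDegree ≤ Q.totalDegree + ∑ b : Fin m, (b : ℕ) :=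
    (totalDegree_mul _ _).trans (by gcongr; exact totalDegree_vandermondePoly_le)
  have h := (totalDegree_mul _ _).trans
    (add_le_add (totalDegree_rename_le Sum.inl (P * vandermondePoly k))
      (totalDegree_rename_le Sum.inr (Q * vandermondePoly m)))
  rw [blockProduct]
  omega

noncomputable def coeffPoly (P : MvPolynomial (Fin k) R) (Q : MvPolynomial (Fin m) R) :
    MvPolynomial (Fin k ⊕ Fin m) R :=
  rename Sum.inl P * rename Sum.inr Q *
    (∏ i : Fin k, ∏ j ∈ univ.erase i, (X (Sum.inl i) - X (Sum.inl j))) *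
    (∏ i : Fin m, ∏ j ∈ univ.erase i, (X (Sum.inr i) - X (Sum.inr j))) *
    ∏ i : Fin m, ∏ j : Fin k, (X (Sum.inr i) - X (Sum.inl j))

lemma coeffPoly_eq (hkm : k + m = n) (P : MvPolynomial (Fin k) R) (Q : MvPolynomial (Fin m) R) :
    coeffPoly P Q = ((-1 : R) ^ (k * m)) • rename (finSumFinEquiv.trans (finCongr hkm)).symm
      (rename (finSumFinEquiv.trans (finCongr hkm)) (blockProduct P Q) *
        (projVandermonde 1 X).det) := by
  subst hkm
  simp only [finCongr_refl, trans_refl]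
  rw [map_mul, rename_rename, symm_comp_self, rename_id, AlgHom.id_apply]
  have hX : (fun i => X (finSumFinEquiv.symm i)) =
      Fin.append (fun a => (X (Sum.inl a) : MvPolynomial (Fin k ⊕ Fin m) R))
        fun b => X (Sum.inr b) :=
    funext fun i => Fin.addCases (fun a => by simp) (fun b => by simp) i
  have hD : rename finSumFinEquiv.symm (projVandermonde 1 X).det =
      (projVandermonde 1 (Fin.append (fun a => X (Sum.inl a)) fun b => X (Sum.inr b)) :
        Matrix (Fin (k + m)) (Fin (k + m)) (MvPolynomial (Fin k ⊕ Fin m) R)).det := by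
    rw [← AlgHom.coe_toRingHom, RingHom.map_det, ← projVandermonde_map]
    simp only [Pi.one_apply, map_one, AlgHom.coe_toRingHom, rename_X, hX]
    rfl
  rw [hD, det_projVandermonde_one_append, coeffPoly,
    ← det_projVandermonde_one_mul_det_vandermonde (fun a => X (Sum.inl a)),
    ← det_projVandermonde_one_mul_det_vandermonde (fun b => X (Sum.inr b)), prod_comm,
    prod_prod_sub_swap]
  simp only [blockProduct, map_mul, rename_vandermondePoly, smul_eq_C_mul, map_pow, map_neg,
    map_one]
  ring

lemma coeff_coeffPoly (hkm : k + m = n) (P : MvPolynomial (Fin k) R) (Q : MvPolynomial (Fin m) R) :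
    coeff (Finsupp.equivFunOnFinite.symm fun _ => n - 1) (coeffPoly P Q) = (-1) ^ (k * m) *
      coeff (permExponent 1)
        (alternation (rename (finSumFinEquiv.trans (finCongr hkm)) (blockProduct P Q))) := by
  set e := finSumFinEquiv.trans (finCongr hkm)
  have hρ : Finsupp.mapDomain e.symm (Finsupp.equivFunOnFinite.symm fun _ => n - 1) =
      Finsupp.equivFunOnFinite.symm fun _ => n - 1 := by
    ext
    rw [Finsupp.mapDomain_equiv_apply]
    rfl
  rw [coeffPoly_eq hkm, coeff_smul, smul_eq_mul, ← hρ, coeff_rename_mapDomain _ e.symm.injective,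
    coeff_mul_det_projVandermonde]

end CommRing

section Field

variable {F : Type*} [Field F]

noncomputable def blockRatio (P : MvPolynomial (Fin k) F) (Q : MvPolynomial (Fin m) F)
    (ν : Fin k ⊕ Fin m → F) : F :=
  eval (ν ∘ Sum.inl) P * eval (ν ∘ Sum.inr) Q / ∏ a, ∏ b, (ν (.inl a) - ν (.inr b))

lemma blockRatio_comp_sumCongr {P : MvPolynomial (Fin k) F} {Q : MvPolynomial (Fin m) F}
    (hP : P.IsSymmetric) (hQ : Q.IsSymmetric) (ν : Fin k ⊕ Fin m → F) (τ : Perm (Fin k))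
    (ρ : Perm (Fin m)) : blockRatio P Q (ν ∘ sumCongr τ ρ) = blockRatio P Q ν := by
  have hPτ : eval ((ν ∘ sumCongr τ ρ) ∘ Sum.inl) P = eval (ν ∘ Sum.inl) P := by
    conv_rhs => rw [← hP τ, eval_rename]
    rfl
  have hQρ : eval ((ν ∘ sumCongr τ ρ) ∘ Sum.inr) Q = eval (ν ∘ Sum.inr) Q := by
    conv_rhs => rw [← hQ ρ, eval_rename]
    rfl
  rw [blockRatio, blockRatio, hPτ, hQρ]
  congr 1
  simp only [Function.comp_apply, sumCongr_apply, Sum.map_inl, Sum.map_inr]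
  rw [← Equiv.prod_comp τ fun a => ∏ b, (ν (.inl a) - ν (.inr b))]
  exact prod_congr rfl fun a _ => Equiv.prod_comp ρ fun b => ν (.inl (τ a)) - ν (.inr b)

lemma blockRatio_comp_blockEquiv (hkm : k + m = n) (P : MvPolynomial (Fin k) F)
    (Q : MvPolynomial (Fin m) F) (lam : Fin n → F) (I : {s : Finset (Fin n) // #s = k}) :
    blockRatio P Q (lam ∘ blockEquiv hkm I) =
      eval (fun i => lam (I.1.orderIsoOfFin I.2 i)) P *
        eval (fun j => lam (I.1ᶜ.orderIsoOfFin (card_compl_eq hkm I.2) j)) Q /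
          ∏ i ∈ I.1, ∏ j ∈ I.1ᶜ, (lam i - lam j) := by
  simp only [blockRatio, Function.comp_def, blockEquiv_inl, blockEquiv_inr]
  rw [prod_orderIsoOfFin I.1 I.2 fun i => ∏ b : Fin m,
    (lam i - lam (I.1ᶜ.orderIsoOfFin (card_compl_eq hkm I.2) b))]
  exact congrArg _ <| prod_congr rfl fun i _ =>
    prod_orderIsoOfFin I.1ᶜ (card_compl_eq hkm I.2) fun j => lam i - lam j

lemma eval_comp_blockProduct (hkm : k + m = n) (P : MvPolynomial (Fin k) F)
    (Q : MvPolynomial (Fin m) F) {μ : Fin n → F} (hμ : Function.Injective μ) :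
    (-1) ^ (k * m) * eval (μ ∘ finSumFinEquiv.trans (finCongr hkm)) (blockProduct P Q) =
      (vandermonde μ).det * blockRatio P Q (μ ∘ finSumFinEquiv.trans (finCongr hkm)) := by
  subst hkm
  have hμ' : μ = Fin.append (fun a => μ (Fin.castAdd m a)) (fun b => μ (Fin.natAdd k b)) :=
    Fin.append_castAdd_natAdd.symm
  have hD : ∏ a : Fin k, ∏ b : Fin m, (μ (Fin.castAdd m a) - μ (Fin.natAdd k b)) ≠ 0 :=
    prod_ne_zero_iff.2 fun a _ => prod_ne_zero_iff.2 fun b _ =>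
      sub_ne_zero.2 <| hμ.ne <| Fin.ext_iff.not.2 <| by
        simp only [Fin.val_castAdd, Fin.val_natAdd]
        omega
  rw [hμ', det_vandermonde_append, prod_prod_sub_swap, ← hμ']
  simp only [blockProduct, blockRatio, map_mul, eval_rename, eval_vandermondePoly,
    Function.comp_def, trans_apply, finSumFinEquiv_apply_left, finSumFinEquiv_apply_right,
    finCongr_refl, refl_apply]
  field_simp

lemma eval_alternation_rename_blockProduct (hkm : k + m = n) (P : MvPolynomial (Fin k) F)
    (Q : MvPolynomial (Fin m) F) {lam : Fin n → F} (hlam : Function.Injective lam) :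
    (-1) ^ (k * m) *
        eval lam (alternation (rename (finSumFinEquiv.trans (finCongr hkm)) (blockProduct P Q))) =
      (vandermonde lam).det * ∑ u : Fin k ⊕ Fin m ≃ Fin n, blockRatio P Q (lam ∘ u) := by
  set e := finSumFinEquiv.trans (finCongr hkm)
  rw [eval_alternation, mul_sum, mul_sum, ← Fintype.sum_equiv (equivCongr e.symm (Equiv.refl _))
    (fun σ => (vandermonde lam).det * blockRatio P Q ((lam ∘ σ) ∘ e)) _ fun _ => rfl]
  refine sum_congr rfl fun σ _ => ?_
  have hV : (vandermonde (lam ∘ σ)).det = Perm.sign σ * (vandermonde lam).det :=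
    det_permute σ (vandermonde lam)
  have hsign : ((Perm.sign σ : ℤ) : F) * (Perm.sign σ : ℤ) = 1 := by
    rw [← Int.cast_mul, ← Units.val_mul, Int.units_mul_self, Units.val_one, Int.cast_one]
  rw [Units.smul_def, zsmul_eq_mul, mul_left_comm, eval_rename,
    eval_comp_blockProduct hkm P Q (hlam.comp σ.injective), hV]
  linear_combination (vandermonde lam).det * blockRatio P Q ((lam ∘ σ) ∘ e) * hsign

end Field

end SubsetSum

open SubsetSum

theorem sum_prod_symm_eval_div_prod {F : Type*} [Field F] [CharZero F]
    (n k : ℕ) (hk : k < n)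
    (lam : Fin n → F) (hlam : Function.Injective lam)
    (P : MvPolynomial (Fin k) F) (hPsymm : P.IsSymmetric)
    (Q : MvPolynomial (Fin (n - k)) F) (hQsymm : Q.IsSymmetric)
    (hdeg : P.totalDegree + Q.totalDegree ≤ k * (n - k)) :
    ∑ I : {s : Finset (Fin n) // s.card = k},
        (MvPolynomial.eval (fun i => lam ((I.1.orderIsoOfFin I.2) i : Fin n)) P) *
          (MvPolynomial.eval (fun j => lam ((I.1ᶜ.orderIsoOfFin
              (by simp [Finset.card_compl, I.2] : I.1ᶜ.card = n - k)) j : Fin n)) Q) /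
          ∏ i ∈ I.1, ∏ j ∈ I.1ᶜ, (lam i - lam j) =
      (MvPolynomial.coeff
          (Finsupp.equivFunOnFinite.symm fun _ : Fin k ⊕ Fin (n - k) => n - 1)
          ((MvPolynomial.rename Sum.inl P) * (MvPolynomial.rename Sum.inr Q) *
            (∏ i : Fin k, ∏ j ∈ Finset.univ.erase i, (X (Sum.inl i) - X (Sum.inl j))) *
            (∏ i : Fin (n - k), ∏ j ∈ Finset.univ.erase i, (X (Sum.inr i) - X (Sum.inr j))) *
            ∏ i : Fin (n - k), ∏ j : Fin k, (X (Sum.inr i) - X (Sum.inl j)))) /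
        ((Nat.factorial k : F) * (Nat.factorial (n - k) : F)) := by
  have hkm : k + (n - k) = n := by omega
  have heval := eval_alternation_rename_blockProduct hkm P Q hlam
  have hcoeff := coeff_coeffPoly hkm P Q
  set A := alternation (rename (finSumFinEquiv.trans (finCongr hkm)) (blockProduct P Q))
  have hA : A = coeff (permExponent 1) A • vandermondePoly n :=
    (isAlternating_alternation _).eq_smul_vandermondePoly <| (totalDegree_alternation_le _).trans <|
      (totalDegree_rename_le _ _).trans (totalDegree_blockProduct_le hkm hdeg)
  rw [hA, smul_eval, eval_vandermondePoly, ← mul_assoc, ← hcoeff, mul_comm,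
    sum_equiv_eq_factorial_mul_sum hkm _ fun u τ ρ =>
      blockRatio_comp_sumCongr hPsymm hQsymm (lam ∘ u) τ ρ,
    nsmul_eq_mul, Nat.cast_mul] at heval
  simp only [blockRatio_comp_blockEquiv] at heval
  rw [eq_div_iff (mul_ne_zero (Nat.cast_ne_zero.2 k.factorial_ne_zero)
    (Nat.cast_ne_zero.2 (n - k).factorial_ne_zero)), mul_comm]
  exact (mul_left_cancel₀ (det_vandermonde_ne_zero_iff.2 hlam) heval).symm
end

section
/- Let λ₁,…,λₙ be distinct elements of a field of characteristic zero and 0 < k < n. Then ∑_{I⊂[n],|I|=k} (∑_{i∈I} λ_i)^{k(n−k)} / ∏_{i∈I}∏_{j∈Iᶜ}(λ_i−λ_j) equals c(k,n)/k!, where c(k,n) is the coefficient of x₁^{n−1}⋯x_k^{n−1} in (x₁+⋯+x_k)^{k(n−k)}·∏_{i=1}^k∏_{j≠i}(x_i−x_j); in particular this sum is independent of the λᵢ. -/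
open Finset MvPolynomial


lemma lagrange_pow_sum {F : Type*} [Field F] {n : ℕ} (lam : Fin n → F)
    (hlam : Function.Injective lam) (d : ℕ) (hd : d < n) :
    ∑ a : Fin n, lam a ^ d / ∏ j ∈ Finset.univ.erase a, (lam a - lam j) =
      if d = n - 1 then 1 else 0 := by
  have hinj : Set.InjOn lam (univ : Finset (Fin n)) := hlam.injOn
  have hdeg : (Polynomial.X ^ d : Polynomial F).degree < (univ : Finset (Fin n)).card := by
    rw [Polynomial.degree_X_pow]; simpa using hd
  have hb : ∀ a : Fin n, (Lagrange.basis univ lam a).coeff (n - 1) =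
      (∏ j ∈ Finset.univ.erase a, (lam a - lam j))⁻¹ := by
    intro a
    have hnd : (Lagrange.basis univ lam a).natDegree = n - 1 := by
      simpa using Lagrange.natDegree_basis hinj (mem_univ a)
    rw [← hnd, Polynomial.coeff_natDegree, Lagrange.basis, Polynomial.leadingCoeff_prod]
    rw [← Finset.prod_inv_distrib]
    refine Finset.prod_congr rfl fun j hj => ?_
    have hne : lam a ≠ lam j := by
      intro h
      exact (Finset.mem_erase.mp hj).1 (hlam h).symm
    rw [Lagrange.basisDivisor, Polynomial.leadingCoeff_mul, Polynomial.leadingCoeff_C,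
      (Polynomial.monic_X_sub_C (lam j)).leadingCoeff, mul_one]
  have h := Lagrange.eq_interpolate (f := (Polynomial.X ^ d : Polynomial F)) hinj hdeg
  have h2 := congrArg (fun p : Polynomial F => p.coeff (n - 1)) h
  simp only [Lagrange.interpolate_apply, Polynomial.finset_sum_coeff, Polynomial.coeff_C_mul, Polynomial.coeff_X_pow,
    Polynomial.eval_pow, Polynomial.eval_X] at h2
  simp_rw [hb] at h2
  simp_rw [div_eq_mul_inv]
  rw [← h2]
  have : n - 1 = d ↔ d = n - 1 := eq_comm
  simp [this]


lemma multivar_lagrange {F : Type*} [Field F] {n k : ℕ} (lam : Fin n → F)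
    (hlam : Function.Injective lam) (hkn : k < n)
    (R : MvPolynomial (Fin k) F) (hR : R.totalDegree ≤ k * (n - 1)) :
    ∑ i : Fin k → Fin n, MvPolynomial.eval (fun t => lam (i t)) R /
        ∏ t : Fin k, ∏ j ∈ Finset.univ.erase (i t), (lam (i t) - lam j) =
      MvPolynomial.coeff (Finsupp.equivFunOnFinite.symm fun _ : Fin k => n - 1) R := by
  classical
  have hn : 0 < n := by omega
  set μ : Fin k →₀ ℕ := Finsupp.equivFunOnFinite.symm fun _ : Fin k => n - 1 with hμ
  have hμap : ∀ t, μ t = n - 1 := fun t => rfl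
  have hstep : ∀ i : Fin k → Fin n,
      MvPolynomial.eval (fun t => lam (i t)) R /
        ∏ t : Fin k, ∏ j ∈ Finset.univ.erase (i t), (lam (i t) - lam j) =
      ∑ m ∈ R.support, R.coeff m *
        ∏ t : Fin k, (lam (i t) ^ m t / ∏ j ∈ Finset.univ.erase (i t), (lam (i t) - lam j)) := by
    intro i
    rw [MvPolynomial.eval_eq', Finset.sum_div]
    refine Finset.sum_congr rfl fun m _ => ?_
    rw [mul_div_assoc, ← Finset.prod_div_distrib]
  simp_rw [hstep]
  rw [Finset.sum_comm]
  have hswap : ∀ m : Fin k →₀ ℕ,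
      ∑ i : Fin k → Fin n, ∏ t : Fin k,
        (lam (i t) ^ m t / ∏ j ∈ Finset.univ.erase (i t), (lam (i t) - lam j)) =
      ∏ t : Fin k, ∑ a : Fin n,
        (lam a ^ m t / ∏ j ∈ Finset.univ.erase a, (lam a - lam j)) := by
    intro m
    rw [Finset.prod_univ_sum, Fintype.piFinset_univ]
  have hkey : ∀ m ∈ R.support,
      (∏ t : Fin k, ∑ a : Fin n,
        (lam a ^ m t / ∏ j ∈ Finset.univ.erase a, (lam a - lam j))) =
      if m = μ then 1 else 0 := by
    intro m hm
    by_cases hmμ : m = μ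
    · subst hmμ
      simp only [if_pos rfl]
      refine Finset.prod_eq_one fun t _ => ?_
      rw [hμap, lagrange_pow_sum lam hlam (n - 1) (by omega)]
      simp
    · rw [if_neg hmμ]
      -- find a coordinate with m t < n - 1
      have hsum : ∑ t : Fin k, m t ≤ k * (n - 1) := by
        have h1 := MvPolynomial.le_totalDegree hm
        have h2 : (m.sum fun _ e => e) = ∑ t : Fin k, m t := by
          rw [Finsupp.sum_fintype]; intro; rfl
        omega
      have hbig : k * (n - 1) = ∑ _t : Fin k, (n - 1) := by
        simp [mul_comm]
      have hex : ∃ t : Fin k, m t < n - 1 := by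
        by_contra hc
        push_neg at hc
        apply hmμ
        have hle : ∀ t : Fin k, m t = n - 1 := by
          intro t
          refine le_antisymm ?_ (hc t)
          by_contra hlt
          push_neg at hlt
          have := Finset.sum_lt_sum (f := fun _t : Fin k => n - 1) (g := fun t => m t)
            (fun s _ => hc s) ⟨t, Finset.mem_univ t, hlt⟩
          omega
        ext t
        rw [hle t, hμap t]
      obtain ⟨t0, ht0⟩ := hex
      refine Finset.prod_eq_zero (Finset.mem_univ t0) ?_
      rw [lagrange_pow_sum lam hlam (m t0) (by omega), if_neg (by omega)]
  have hfinal : ∀ m ∈ R.support,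
      ∑ i : Fin k → Fin n, MvPolynomial.coeff m R *
        ∏ t : Fin k, (lam (i t) ^ m t / ∏ j ∈ Finset.univ.erase (i t), (lam (i t) - lam j)) =
      if m = μ then MvPolynomial.coeff m R else 0 := by
    intro m hm
    rw [← Finset.mul_sum, hswap m, hkey m hm, mul_ite, mul_one, mul_zero]
  rw [Finset.sum_congr rfl hfinal, Finset.sum_ite_eq' R.support μ (fun m => MvPolynomial.coeff m R)]
  by_cases h : μ ∈ R.support
  · rw [if_pos h]
  · rw [if_neg h, eq_comm, ← MvPolynomial.notMem_support_iff] at *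
    simp [MvPolynomial.notMem_support_iff.mp h]


lemma eval_term_eq {F : Type*} [Field F] {n k : ℕ} (lam : Fin n → F)
    (hlam : Function.Injective lam) (e : ℕ) (i : Fin k → Fin n)
    (hi : Function.Injective i) :
    MvPolynomial.eval (fun t => lam (i t))
        ((∑ t : Fin k, X t) ^ e *
          ∏ t : Fin k, ∏ s ∈ Finset.univ.erase t, (X t - X s)) /
      ∏ t : Fin k, ∏ j ∈ Finset.univ.erase (i t), (lam (i t) - lam j) =
    (∑ a ∈ Finset.univ.image i, lam a) ^ e /
      ∏ a ∈ Finset.univ.image i, ∏ b ∈ (Finset.univ.image i)ᶜ, (lam a - lam b) := by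
  classical
  set I : Finset (Fin n) := Finset.univ.image i with hI
  have hinj2 : ∀ x ∈ (univ : Finset (Fin k)), ∀ y ∈ (univ : Finset (Fin k)),
      i x = i y → x = y := fun x _ y _ h => hi h
  -- numerator
  have hP : ∑ a ∈ I, lam a = ∑ t : Fin k, lam (i t) := Finset.sum_image hinj2
  set V : F := ∏ a ∈ I, ∏ b ∈ I.erase a, (lam a - lam b) with hV
  set W : F := ∏ a ∈ I, ∏ b ∈ Iᶜ, (lam a - lam b) with hW
  have hVi : V = ∏ t : Fin k, ∏ s ∈ Finset.univ.erase t, (lam (i t) - lam (i s)) := by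
    rw [hV, Finset.prod_image hinj2]
    refine Finset.prod_congr rfl fun t _ => ?_
    rw [show I.erase (i t) = (Finset.univ.erase t).image i by
      rw [Finset.image_erase hi]]
    exact Finset.prod_image fun x _ y _ h => hi h
  have heval : MvPolynomial.eval (fun t => lam (i t))
      ((∑ t : Fin k, X t) ^ e *
        ∏ t : Fin k, ∏ s ∈ Finset.univ.erase t, (X t - X s)) =
      (∑ a ∈ I, lam a) ^ e * V := by
    rw [map_mul, map_pow, map_sum, hP, hVi]
    congr 1
    · simp
    · rw [map_prod]
      refine Finset.prod_congr rfl fun t _ => ?_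
      rw [map_prod]
      refine Finset.prod_congr rfl fun s _ => ?_
      simp
  have hD : ∏ t : Fin k, ∏ j ∈ Finset.univ.erase (i t), (lam (i t) - lam j) = V * W := by
    rw [show (∏ t : Fin k, ∏ j ∈ Finset.univ.erase (i t), (lam (i t) - lam j)) =
        ∏ a ∈ I, ∏ j ∈ Finset.univ.erase a, (lam a - lam j) from
      (Finset.prod_image (f := fun a => ∏ j ∈ Finset.univ.erase a, (lam a - lam j))
        hinj2).symm]
    rw [hV, hW, ← Finset.prod_mul_distrib]
    refine Finset.prod_congr rfl fun a ha => ?_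
    rw [← Finset.prod_union]
    · congr 1
      ext b
      simp only [Finset.mem_union, Finset.mem_erase, Finset.mem_compl, Finset.mem_univ,
        and_true, true_and]
      constructor
      · intro hba
        by_cases hb : b ∈ I
        · exact Or.inl ⟨hba, hb⟩
        · exact Or.inr hb
      · intro h
        rcases h with h | h
        · exact h.1
        · intro hba; subst hba; exact h ha
    · exact Finset.disjoint_left.mpr fun b hb hb' =>
        (Finset.mem_compl.mp hb') (Finset.mem_of_mem_erase hb)
  have hVne : V ≠ 0 := by
    rw [hV]
    refine Finset.prod_ne_zero_iff.mpr fun a _ => Finset.prod_ne_zero_iff.mpr fun b hb => ?_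
    exact sub_ne_zero_of_ne fun h => (Finset.mem_erase.mp hb).1 (hlam h).symm
  rw [heval, hD, mul_comm V W, mul_div_mul_right _ _ hVne]

theorem sum_sum_pow_div_prod {F : Type*} [Field F] [CharZero F]
    (n k : ℕ) (hk0 : 0 < k) (hk : k < n)
    (lam : Fin n → F) (hlam : Function.Injective lam) :
    ∑ I : {s : Finset (Fin n) // s.card = k},
        (∑ i ∈ I.1, lam i) ^ (k * (n - k)) / ∏ i ∈ I.1, ∏ j ∈ I.1ᶜ, (lam i - lam j) =
      (MvPolynomial.coeff (Finsupp.equivFunOnFinite.symm fun _ : Fin k => n - 1)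
          ((∑ i : Fin k, X i) ^ (k * (n - k)) *
            ∏ i : Fin k, ∏ j ∈ Finset.univ.erase i, (X i - X j))) /
        (Nat.factorial k : F) := by
  classical
  set R : MvPolynomial (Fin k) F :=
    (∑ i : Fin k, X i) ^ (k * (n - k)) *
      ∏ i : Fin k, ∏ j ∈ Finset.univ.erase i, (X i - X j) with hRdef
  -- total degree bound
  have hdeg : R.totalDegree ≤ k * (n - 1) := by
    refine (MvPolynomial.totalDegree_mul _ _).trans ?_
    have h1 : ((∑ i : Fin k, X i : MvPolynomial (Fin k) F)).totalDegree ≤ 1 := by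
      refine (MvPolynomial.totalDegree_finset_sum _ _).trans ?_
      refine Finset.sup_le fun t _ => ?_
      rw [MvPolynomial.totalDegree_X]
    have h2 : (((∑ i : Fin k, X i : MvPolynomial (Fin k) F)) ^ (k * (n - k))).totalDegree
        ≤ k * (n - k) := by
      refine (MvPolynomial.totalDegree_pow _ _).trans ?_
      calc k * (n - k) * (∑ i : Fin k, X i : MvPolynomial (Fin k) F).totalDegree
          ≤ k * (n - k) * 1 := Nat.mul_le_mul_left _ h1
        _ = k * (n - k) := by ring
    have h3 : ((∏ i : Fin k, ∏ j ∈ Finset.univ.erase i,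
        (X i - X j : MvPolynomial (Fin k) F)).totalDegree) ≤ k * (k - 1) := by
      refine (MvPolynomial.totalDegree_finset_prod _ _).trans ?_
      have hone : ∀ i : Fin k, (∏ j ∈ Finset.univ.erase i,
          (X i - X j : MvPolynomial (Fin k) F)).totalDegree ≤ k - 1 := by
        intro i
        refine (MvPolynomial.totalDegree_finset_prod _ _).trans ?_
        calc ∑ j ∈ Finset.univ.erase i,
              (X i - X j : MvPolynomial (Fin k) F).totalDegree
            ≤ ∑ j ∈ Finset.univ.erase i, 1 := by
              refine Finset.sum_le_sum fun j _ => ?_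
              rw [sub_eq_add_neg]
              refine (MvPolynomial.totalDegree_add _ _).trans ?_
              rw [MvPolynomial.totalDegree_X]
              refine max_le le_rfl ?_
              rw [show (-X j : MvPolynomial (Fin k) F) = (-1 : F) • X j by simp]
              refine (MvPolynomial.totalDegree_smul_le _ _).trans ?_
              rw [MvPolynomial.totalDegree_X]
          _ = k - 1 := by simp [Finset.card_erase_of_mem]
      calc ∑ i : Fin k, (∏ j ∈ Finset.univ.erase i,
            (X i - X j : MvPolynomial (Fin k) F)).totalDegree
          ≤ ∑ _i : Fin k, (k - 1) := Finset.sum_le_sum fun i _ => hone i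
        _ = k * (k - 1) := by simp [mul_comm]
    calc _ ≤ k * (n - k) + k * (k - 1) := Nat.add_le_add h2 h3
      _ = k * ((n - k) + (k - 1)) := by ring
      _ ≤ k * (n - 1) := Nat.mul_le_mul_left _ (by omega)
  have hML := multivar_lagrange lam hlam hk R hdeg
  -- the function being summed
  set f : (Fin k → Fin n) → F := fun i =>
    MvPolynomial.eval (fun t => lam (i t)) R /
      ∏ t : Fin k, ∏ j ∈ Finset.univ.erase (i t), (lam (i t) - lam j) with hf
  -- terms with non-injective i vanish
  have hzero : ∀ i : Fin k → Fin n, ¬ Function.Injective i → f i = 0 := by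
    intro i hni
    obtain ⟨a, b, hab, hne⟩ := Function.not_injective_iff.mp hni
    have hev : MvPolynomial.eval (fun t => lam (i t)) R = 0 := by
      rw [hRdef, map_mul, map_prod]
      have : (MvPolynomial.eval (fun t => lam (i t)))
          (∏ j ∈ Finset.univ.erase a, (X a - X j)) = 0 := by
        rw [map_prod]
        refine Finset.prod_eq_zero (Finset.mem_erase.mpr ⟨hne.symm, Finset.mem_univ b⟩) ?_
        simp [hab]
      rw [Finset.prod_eq_zero (Finset.mem_univ a) this, mul_zero]
    rw [hf]
    simp only
    rw [hev, zero_div]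
  have hrestrict : ∑ i ∈ Finset.univ.filter
      (fun i : Fin k → Fin n => Function.Injective i), f i = ∑ i : Fin k → Fin n, f i := by
    refine Finset.sum_filter_of_ne fun i _ hne => ?_
    by_contra hni
    exact hne (hzero i hni)
  -- the grouping bijection
  set eI : ∀ I : {s : Finset (Fin n) // s.card = k}, Fin k ≃ ↥(I.1) := fun I =>
    (Fintype.equivFinOfCardEq (by rw [Fintype.card_coe, I.2])).symm with heI
  set Φ : ({s : Finset (Fin n) // s.card = k} × Equiv.Perm (Fin k)) → (Fin k → Fin n) :=
    fun p t => ((eI p.1) (p.2 t) : Fin n) with hΦ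
  have hΦinj : ∀ p, Function.Injective (Φ p) := by
    intro p x y hxy
    exact p.2.injective ((eI p.1).injective (Subtype.coe_injective hxy))
  have hΦimg : ∀ p, Finset.univ.image (Φ p) = p.1.1 := by
    intro p
    ext a
    simp only [Finset.mem_image, Finset.mem_univ, true_and]
    constructor
    · rintro ⟨t, rfl⟩
      exact ((eI p.1) (p.2 t)).2
    · intro ha
      exact ⟨p.2.symm ((eI p.1).symm ⟨a, ha⟩), by simp [hΦ]⟩
  set g : {s : Finset (Fin n) // s.card = k} → F := fun I =>
    (∑ a ∈ I.1, lam a) ^ (k * (n - k)) / ∏ a ∈ I.1, ∏ b ∈ I.1ᶜ, (lam a - lam b) with hg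
  have hcompat : ∀ p : {s : Finset (Fin n) // s.card = k} × Equiv.Perm (Fin k),
      g p.1 = f (Φ p) := by
    intro p
    rw [hf]
    simp only
    rw [hRdef]
    rw [eval_term_eq lam hlam (k * (n - k)) (Φ p) (hΦinj p), hΦimg p]
  have hsplit : ∑ p : {s : Finset (Fin n) // s.card = k} × Equiv.Perm (Fin k), g p.1 =
      ∑ i ∈ Finset.univ.filter (fun i : Fin k → Fin n => Function.Injective i), f i := by
    refine Finset.sum_bij (fun p _ => Φ p) ?_ ?_ ?_ ?_
    · intro p _
      exact Finset.mem_filter.mpr ⟨Finset.mem_univ _, hΦinj p⟩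
    · intro p _ q _ hpq
      have h1 : p.1 = q.1 := Subtype.ext (by rw [← hΦimg p, ← hΦimg q, hpq])
      obtain ⟨I, σ⟩ := p
      obtain ⟨I', σ'⟩ := q
      simp only at h1
      subst h1
      have h2 : σ = σ' := by
        ext t
        have := congrFun hpq t
        simp only [hΦ] at this
        exact congrArg Fin.val ((eI I).injective (Subtype.coe_injective this))
      rw [h2]
    · intro b hb
      have hbinj : Function.Injective b := (Finset.mem_filter.mp hb).2
      refine ⟨⟨⟨Finset.univ.image b, ?_⟩, ?_⟩, Finset.mem_univ _, ?_⟩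
      · rw [Finset.card_image_of_injective _ hbinj, Finset.card_univ, Fintype.card_fin]
      case refine_2 =>
        set I : {s : Finset (Fin n) // s.card = k} :=
          ⟨Finset.univ.image b, by
            rw [Finset.card_image_of_injective _ hbinj, Finset.card_univ, Fintype.card_fin]⟩
          with hIdef
        have hg0inj : Function.Injective (fun t => (eI I).symm
            ⟨b t, Finset.mem_image_of_mem b (Finset.mem_univ t)⟩) := by
          intro x y hxy
          have := (eI I).symm.injective hxy
          exact hbinj (congrArg Subtype.val this)
        exact Equiv.ofBijective _ ((Finite.injective_iff_bijective).mp hg0inj)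
      · funext t
        simp only [hΦ, Equiv.ofBijective_apply, Equiv.apply_symm_apply]
    · intro p _
      exact hcompat p
  have hcount : ∑ p : {s : Finset (Fin n) // s.card = k} × Equiv.Perm (Fin k), g p.1 =
      (Nat.factorial k : F) * ∑ I : {s : Finset (Fin n) // s.card = k}, g I := by
    rw [Fintype.sum_prod_type, Finset.mul_sum]
    refine Finset.sum_congr rfl fun I _ => ?_
    have h0 : (∑ σ : Equiv.Perm (Fin k), g (I, σ).1) = ∑ _σ : Equiv.Perm (Fin k), g I :=
      Finset.sum_congr rfl fun σ _ => rfl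
    rw [h0, Finset.sum_const, Finset.card_univ, Fintype.card_perm, Fintype.card_fin,
      nsmul_eq_mul]
  have hfact : (Nat.factorial k : F) ≠ 0 :=
    Nat.cast_ne_zero.mpr (Nat.factorial_ne_zero k)
  rw [eq_div_iff hfact]
  calc (∑ I : {s : Finset (Fin n) // s.card = k}, g I) * (Nat.factorial k : F)
      = (Nat.factorial k : F) * ∑ I : {s : Finset (Fin n) // s.card = k}, g I := mul_comm _ _
    _ = ∑ i : Fin k → Fin n, f i := by rw [← hcount, hsplit, hrestrict]
    _ = _ := hML
end
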